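/- arXiv:math/0302058 — 5 statements merged into one kernel-verified Lean document; each statement's English description precedes it below -/
import Mathlib

section
/- A finite sequence a of integers has no strictly increasing subsequence of length t if and only if a can be decomposed into t-1 non-increasing subsequences (i.e., its index set can be partitioned into t-1 sets on each of which the sequence is non-increasing). -/
noncomputable def ell {L : ℕ} (a : Fin L → ℤ) : Fin L → ℕ
  | i => ((Finset.univ.filter (fun j => j < i ∧ a j < a i)).attach.sup
      (fun j => ell a j.1)) + 1
termination_by i => i.val
decreasing_by
  have h := j.2
  simp only [Finset.mem_filter, Finset.mem_univ, true_and] at h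
  exact h.1

lemma ell_pos {L : ℕ} (a : Fin L → ℤ) (i : Fin L) : 1 ≤ ell a i := by
  rw [ell]; omega

lemma ell_lt {L : ℕ} (a : Fin L → ℤ) {i j : Fin L} (hij : j < i) (ha : a j < a i) :
    ell a j < ell a i := by
  conv_rhs => rw [ell]
  have hmem : j ∈ Finset.univ.filter (fun k => k < i ∧ a k < a i) := by
    simp [hij, ha]
  have := Finset.le_sup (f := fun k : {x // x ∈ Finset.univ.filter (fun k => k < i ∧ a k < a i)} => ell a k.1)
    (Finset.mem_attach _ ⟨j, hmem⟩)
  simp only at this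
  omega

lemma snoc_strictMono {n : ℕ} {α : Type*} [Preorder α] {g : Fin n → α} (hg : StrictMono g)
    {x : α} (hx : ∀ k, g k < x) : StrictMono (Fin.snoc g x) := by
  intro p q hpq
  induction q using Fin.lastCases with
  | last =>
      have hp : p ≠ Fin.last n := ne_of_lt hpq
      obtain ⟨p', rfl⟩ := Fin.exists_castSucc_eq.2 hp
      simp only [Fin.snoc_castSucc, Fin.snoc_last]
      exact hx p'
  | cast q' =>
      have hq : p < Fin.last n := lt_trans hpq (Fin.castSucc_lt_last q')
      obtain ⟨p', rfl⟩ := Fin.exists_castSucc_eq.2 (ne_of_lt hq)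
      simp only [Fin.snoc_castSucc]
      exact hg (by simpa using hpq)

lemma ell_chain {L : ℕ} (a : Fin L → ℤ) (i : Fin L) :
    ∃ g : Fin (ell a i) → Fin L, StrictMono g ∧ StrictMono (a ∘ g) ∧
      g ⟨ell a i - 1, by have := ell_pos a i; omega⟩ = i := by
  suffices h : ∀ n, ∀ i : Fin L, i.val < n →
      ∃ g : Fin (ell a i) → Fin L, StrictMono g ∧ StrictMono (a ∘ g) ∧
        g ⟨ell a i - 1, by have := ell_pos a i; omega⟩ = i by
    exact h L i i.2
  intro n
  induction n using Nat.strong_induction_on with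
  | _ n ih =>
    intro i hi
    by_cases hne : (Finset.univ.filter (fun j => j < i ∧ a j < a i)).Nonempty
    · obtain ⟨j, hj, hsup⟩ := Finset.exists_mem_eq_sup _ (hne.attach)
        (fun k : {x // x ∈ Finset.univ.filter (fun j => j < i ∧ a j < a i)} => ell a k.1)
      have hjmem := j.2
      simp only [Finset.mem_filter, Finset.mem_univ, true_and] at hjmem
      obtain ⟨g', hg1, hg2, hg3⟩ := ih i.val hi j.1 hjmem.1
      have hm1 : 1 ≤ ell a j.1 := ell_pos a j.1
      have heq : ell a i = ell a j.1 + 1 := by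
        rw [ell]; rw [hsup]
      -- every value of g' is ≤ j, and a-value ≤ a j
      have hle : ∀ k : Fin (ell a j.1), g' k ≤ j.1 ∧ a (g' k) ≤ a j.1 := by
        intro k
        have hk : k ≤ (⟨ell a j.1 - 1, by omega⟩ : Fin (ell a j.1)) := by
          rw [Fin.le_def]; simp; omega
        rcases lt_or_eq_of_le hk with h | h
        · exact ⟨le_of_lt (hg3 ▸ hg1 h), le_of_lt (hg3 ▸ hg2 h)⟩
        · rw [h, hg3]; exact ⟨le_rfl, le_rfl⟩
      refine ⟨Fin.snoc g' i ∘ Fin.cast heq, ?_, ?_, ?_⟩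
      · apply StrictMono.comp (g := Fin.snoc g' i)
        · exact snoc_strictMono hg1 (fun k => lt_of_le_of_lt (hle k).1 hjmem.1)
        · exact fun p q h => h
      · have hcomp : a ∘ Fin.snoc g' i = Fin.snoc (a ∘ g') (a i) := by
          funext k
          induction k using Fin.lastCases with
          | last => simp
          | cast k' => simp
        rw [show a ∘ (Fin.snoc g' i ∘ Fin.cast heq) = (a ∘ Fin.snoc g' i) ∘ Fin.cast heq from rfl,
          hcomp]
        apply StrictMono.comp
        · exact snoc_strictMono hg2 (fun k => lt_of_le_of_lt (hle k).2 hjmem.2)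
        · exact fun p q h => h
      · have : (Fin.cast heq ⟨ell a i - 1, by have := ell_pos a i; omega⟩ : Fin (ell a j.1 + 1)) =
            Fin.last (ell a j.1) := by
          apply Fin.ext; simp; omega
        simp only [Function.comp_apply, this, Fin.snoc_last]
    · have heq : ell a i = 1 := by
        rw [ell]
        rw [Finset.not_nonempty_iff_eq_empty] at hne
        simp [hne]
      refine ⟨fun _ => i, ?_, ?_, rfl⟩ <;>
      · intro p q h
        have hp := p.2; have hq := q.2
        exact absurd (Fin.ext (by omega)) (ne_of_lt h)

theorem no_increasing_subseq_iff_decomp_nonincreasing (L t : ℕ) (ht : 1 ≤ t)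
    (a : Fin L → ℤ) :
    (¬ ∃ g : Fin t → Fin L, StrictMono g ∧ StrictMono (a ∘ g)) ↔
      ∃ f : Fin L → Fin (t - 1),
        ∀ i j : Fin L, i < j → f i = f j → a j ≤ a i := by
  constructor
  · intro hno
    have key : ∀ i, ell a i < t := by
      intro i
      by_contra h
      push_neg at h
      obtain ⟨g, hg1, hg2, _⟩ := ell_chain a i
      have hcast : StrictMono (Fin.castLE h) := fun p q hpq => hpq
      exact hno ⟨g ∘ Fin.castLE h, hg1.comp hcast, hg2.comp hcast⟩
    refine ⟨fun i => ⟨ell a i - 1, by have := key i; have := ell_pos a i; omega⟩, ?_⟩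
    intro i j hij hf
    by_contra h
    push_neg at h
    have h1 := ell_lt a hij h
    have h2 : ell a i - 1 = ell a j - 1 := congrArg Fin.val hf
    have := ell_pos a i; have := ell_pos a j
    omega
  · rintro ⟨f, hf⟩ ⟨g, hg1, hg2⟩
    have hcard : Fintype.card (Fin (t - 1)) < Fintype.card (Fin t) := by simp; omega
    obtain ⟨x, y, hxy, hfxy⟩ := Fintype.exists_ne_map_eq_of_card_lt (f ∘ g) hcard
    rcases lt_or_gt_of_ne hxy with h | h
    · exact absurd (hf _ _ (hg1 h) hfxy) (not_le.2 (hg2 h))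
    · exact absurd (hf _ _ (hg1 h) hfxy.symm) (not_le.2 (hg2 h))
end

section
/- The length of the longest strictly increasing subsequence of a finite sequence r of integers equals the length of the first row of the standard tableau Ins(r) obtained by Schensted row insertion of the entries of r in order (using the row-standard convention: rows strictly increasing, columns non-decreasing). -/
/-! Only first-row insertion matters for the first row of `Ins(r)`, and first-row insertion is
patience sorting: after reading a prefix of `r`, the `j`-th entry of the row is the least
possible last entry of a strictly increasing subsequence of length `j + 1` of that prefix.
Replacing the leftmost entry `≥ x` by `x` is exactly what keeps this invariant when `x` is
read, and the invariant makes the row length the longest increasing subsequence length. -/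

/-- Schensted row insertion of `x` into a tableau (row-standard convention: rows strictly
increasing, columns non-decreasing). `x` replaces the leftmost entry `≥ x` of the first
row, and the replaced entry is inserted into the rest of the tableau; if no such entry
exists, `x` is appended to the first row. -/
def rowInsert : ℤ → List (List ℤ) → List (List ℤ)
  | x, [] => [[x]]
  | x, r :: rs =>
    match r.findIdx? (fun y => decide (x ≤ y)) with
    | none => (r ++ [x]) :: rs
    | some j => (r.set j x) :: rowInsert (r.getD j 0) rs

/-- The insertion tableau `Ins(r)` of a sequence `r`, obtained by successively
row-inserting the entries of `r`. -/
def ins (r : List ℤ) : List (List ℤ) :=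
  r.foldl (fun T x => rowInsert x T) []

namespace List

variable {α : Type*}

theorem pairwise_iff_getElem? {R : α → α → Prop} {l : List α} :
    l.Pairwise R ↔
      ∀ (i i' : ℕ) a b, i < i' → l[i]? = some a → l[i']? = some b → R a b := by
  simp only [pairwise_iff_getElem, getElem?_eq_some_iff]
  constructor
  · rintro h i i' _ _ hii' ⟨hi, rfl⟩ ⟨hi', rfl⟩
    exact h i i' hi hi' hii'
  · intro h i i' hi hi' hii'
    exact h i i' _ _ hii' ⟨hi, rfl⟩ ⟨hi', rfl⟩

theorem append_singleton_sublist_append_singleton {s r : List α} {x y : α}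
    (h : s ++ [y] <+ r ++ [x]) : s ++ [y] <+ r ∨ (y = x ∧ s <+ r) := by
  obtain ⟨l₁, l₂, hs, h₁, h₂⟩ := sublist_append_iff.mp h
  rcases sublist_singleton.mp h₂ with rfl | rfl
  · simp_all
  · obtain ⟨rfl, hyx⟩ := append_inj' hs rfl
    exact .inr ⟨singleton_inj.mp hyx, h₁⟩

end List

variable {α : Type*} [LinearOrder α]

def insertRow (row : List α) (x : α) : List α :=
  match row.findIdx? (fun y => decide (x ≤ y)) with
  | none => row ++ [x]
  | some j => row.set j x

theorem headD_rowInsert (x : ℤ) (T : List (List ℤ)) :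
    (rowInsert x T).headD [] = insertRow (T.headD []) x := by
  cases T with
  | nil => rfl
  | cons r rs => cases h : r.findIdx? (fun y => decide (x ≤ y)) <;> simp [rowInsert, insertRow, h]

theorem headD_ins (r : List ℤ) : (ins r).headD [] = r.foldl insertRow [] :=
  (List.foldl_hom (·.headD []) fun T x => (headD_rowInsert x T).symm).symm

theorem exists_getElem?_insertRow {row : List α} (hrow : row.Pairwise (· < ·)) (x : α) :
    ∃ j ≤ row.length, (∀ i a, row[i]? = some a → (a < x ↔ i < j)) ∧
      ∀ i, (insertRow row x)[i]? = if i = j then some x else row[i]? := by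
  unfold insertRow
  split
  case h_1 hnone =>
    refine ⟨row.length, le_rfl, fun i a ha => ?_, fun i => ?_⟩
    · obtain ⟨hi, rfl⟩ := List.getElem?_eq_some_iff.mp ha
      simpa [hi] using List.findIdx?_eq_none_iff.mp hnone _ (List.getElem_mem hi)
    · rcases lt_trichotomy i row.length with h | rfl | h
      · simp [List.getElem?_append_left h, h.ne]
      · simp
      · simp [List.getElem?_append_right h.le, h.ne', List.getElem?_eq_none h.le,
          Nat.sub_ne_zero_of_lt h]
  case h_2 j hsome =>
    obtain ⟨hj, hxj, hlt⟩ := List.findIdx?_eq_some_iff_getElem.mp hsome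
    refine ⟨j, hj.le, fun i a ha => ?_, fun i => by simp [List.getElem?_set, hj, eq_comm]⟩
    obtain ⟨hi, rfl⟩ := List.getElem?_eq_some_iff.mp ha
    refine ⟨fun hix => ?_, fun hij => by simpa using hlt i hij⟩
    by_contra! hji
    have hrow_ji : row[j] ≤ row[i] := by
      rcases hji.lt_or_eq with hji | rfl
      · exact (List.pairwise_iff_getElem.mp hrow j i hj hi hji).le
      · exact le_rfl
    exact ((by simpa using hxj : x ≤ row[j]).trans hrow_ji).not_gt hix

/-- Patience-sorting invariant: `row[j]` is the least last entry of a strictly increasing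
subsequence of `r` of length `j + 1`. -/
structure IsMinTails (r row : List α) : Prop where
  pairwise : row.Pairwise (· < ·)
  exists_sublist : ∀ j y, row[j]? = some y →
    ∃ s : List α, (s ++ [y]).Sublist r ∧ (s ++ [y]).IsChain (· < ·) ∧ s.length = j
  le_of_sublist : ∀ s y, (s ++ [y]).Sublist r → (s ++ [y]).IsChain (· < ·) →
    ∃ z, row[s.length]? = some z ∧ z ≤ y

namespace IsMinTails

theorem nil : IsMinTails [] ([] : List α) where
  pairwise := List.Pairwise.nil
  exists_sublist j y h := by simp at h
  le_of_sublist s y h := by simp at h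

variable {r row : List α}

theorem pairwise_insertRow (h : IsMinTails r row) (x : α) :
    (insertRow row x).Pairwise (· < ·) := by
  obtain ⟨j, -, hlt, hget⟩ := exists_getElem?_insertRow h.pairwise x
  have hsorted := List.pairwise_iff_getElem?.mp h.pairwise
  refine List.pairwise_iff_getElem?.mpr fun i i' a b hii' ha hb => ?_
  rw [hget] at ha hb
  by_cases hij : i = j
  · have hi'j : i' ≠ j := by omega
    simp only [hij, hi'j, if_true, if_false, Option.some.injEq] at ha hb
    subst ha
    have hj : j < row.length := by have := (List.getElem?_eq_some_iff.mp hb).1; omega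
    have hc : row[j]? = some row[j] := List.getElem?_eq_getElem hj
    have hxc : x ≤ row[j] := not_lt.mp fun hcx => lt_irrefl j ((hlt j _ hc).mp hcx)
    exact hxc.trans_lt (hsorted j i' _ b (by omega) hc hb)
  · simp only [hij, if_false] at ha
    by_cases hi'j : i' = j
    · simp only [hi'j, if_true, Option.some.injEq] at hb
      exact hb ▸ (hlt i a ha).mpr (by omega)
    · simp only [hi'j, if_false] at hb
      exact hsorted i i' a b hii' ha hb

theorem exists_sublist_insertRow (h : IsMinTails r row) (x : α) (k : ℕ) (y : α)
    (hy : (insertRow row x)[k]? = some y) :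
    ∃ s : List α, (s ++ [y]).Sublist (r ++ [x]) ∧ (s ++ [y]).IsChain (· < ·) ∧
      s.length = k := by
  obtain ⟨j, hj, hlt, hget⟩ := exists_getElem?_insertRow h.pairwise x
  rw [hget] at hy
  split_ifs at hy with hkj
  · obtain rfl := Option.some.inj hy
    subst hkj
    cases k with
    | zero => exact ⟨[], by simp, by simp, rfl⟩
    | succ i =>
      obtain ⟨w, hw⟩ : ∃ w, row[i]? = some w := ⟨_, List.getElem?_eq_getElem (by omega)⟩
      obtain ⟨s, hs, hc, rfl⟩ := h.exists_sublist i w hw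
      refine ⟨s ++ [w], hs.append (List.Sublist.refl [x]), ?_, by simp⟩
      simpa using ⟨hc, (hlt _ w hw).mpr (by omega)⟩
  · obtain ⟨s, hs, hc, hlen⟩ := h.exists_sublist k y hy
    exact ⟨s, hs.trans (List.sublist_append_left r [x]), hc, hlen⟩

theorem le_of_sublist_insertRow (h : IsMinTails r row) (x : α) (s : List α) (y : α)
    (hs : (s ++ [y]).Sublist (r ++ [x])) (hc : (s ++ [y]).IsChain (· < ·)) :
    ∃ z, (insertRow row x)[s.length]? = some z ∧ z ≤ y := by
  obtain ⟨j, hj, hlt, hget⟩ := exists_getElem?_insertRow h.pairwise x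
  rw [hget]
  rcases List.append_singleton_sublist_append_singleton hs with hs | ⟨rfl, hsr⟩
  · obtain ⟨z, hz, hzy⟩ := h.le_of_sublist s y hs hc
    split_ifs with hsj
    · exact ⟨x, rfl, (not_lt.mp fun hzx => ((hlt _ z hz).mp hzx).ne hsj).trans hzy⟩
    · exact ⟨z, hz, hzy⟩
  · have hsj : s.length ≤ j := by
      rcases List.eq_nil_or_concat' s with rfl | ⟨s', z, rfl⟩
      · exact Nat.zero_le j
      obtain ⟨hc', hzy⟩ : (s' ++ [z]).IsChain (· < ·) ∧ z < y := by simpa using hc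
      obtain ⟨w, hw, hwz⟩ := h.le_of_sublist s' z hsr hc'
      simpa using (hlt _ w hw).mp (hwz.trans_lt hzy)
    split_ifs with hsj'
    · exact ⟨y, rfl, le_rfl⟩
    · obtain ⟨w, hw⟩ : ∃ w, row[s.length]? = some w :=
        ⟨_, List.getElem?_eq_getElem (by omega)⟩
      exact ⟨w, hw, ((hlt _ w hw).mpr (by omega)).le⟩

theorem insertRow (h : IsMinTails r row) (x : α) : IsMinTails (r ++ [x]) (insertRow row x) where
  pairwise := h.pairwise_insertRow x
  exists_sublist := h.exists_sublist_insertRow x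
  le_of_sublist := h.le_of_sublist_insertRow x

end IsMinTails

theorem isMinTails_foldl_insertRow (r : List α) : IsMinTails r (r.foldl insertRow []) := by
  induction r using List.reverseRecOn with
  | nil => exact .nil
  | append_singleton r x ih =>
    simpa only [List.foldl_append, List.foldl_cons, List.foldl_nil] using ih.insertRow x

theorem IsMinTails.isGreatest_length {r row : List α} (h : IsMinTails r row) :
    IsGreatest {k | ∃ s : List α, s.Sublist r ∧ s.IsChain (· < ·) ∧ s.length = k}
      row.length := by
  constructor
  · rcases List.eq_nil_or_concat' row with rfl | ⟨row', y, rfl⟩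
    · exact ⟨[], List.nil_sublist r, List.isChain_nil, rfl⟩
    · obtain ⟨s, hs, hc, hlen⟩ := h.exists_sublist row'.length y (by simp)
      exact ⟨s ++ [y], hs, hc, by simp [hlen]⟩
  · rintro k ⟨s, hs, hc, rfl⟩
    rcases List.eq_nil_or_concat' s with rfl | ⟨s', y, rfl⟩
    · exact Nat.zero_le _
    · obtain ⟨z, hz, -⟩ := h.le_of_sublist s' y hs hc
      simpa using (List.getElem?_eq_some_iff.mp hz).1

/-- Schensted's theorem: the length of the first row of `Ins(r)` is the greatest length of
a strictly increasing subsequence of `r`. -/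
theorem schensted (r : List ℤ) :
    IsGreatest {k | ∃ s : List ℤ, s.Sublist r ∧ s.Chain' (· < ·) ∧ s.length = k}
      ((ins r).headD []).length := by
  rw [headD_ins]
  exact (isMinTails_foldl_insertRow r).isGreatest_length
end

section
/- (Dual Greene theorem) For every finite sequence r of integers and every k ≥ 0, the maximum total length of a subsequence of r that can be decomposed into k non-increasing subsequences equals α_k*(Ins(r)), the sum of the lengths of the first k columns of the Schensted insertion tableau Ins(r). -/
/-!
A subsequence of `w` split into `k` non-increasing subsequences is the same thing as a
colouring of the letters of `w` by `Option (Fin k)` (`none` = not chosen) whose colour classes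
are non-increasing, and the theorem asks for the largest possible number of coloured letters.

This set is invariant under Knuth's elementary moves. One kind of move is the other read
backwards in the dual order, and for it the only delicate case is when the two transposed
letters share a colour, which is repaired by recolouring a letter and, if needed, swapping two
colours on the rest of the word. Schensted row insertion changes the reading word of the
tableau by Knuth moves only, so `r` may be replaced by the reading word of `Ins(r)`. There
each row is strictly increasing, hence meets every colour at most once, which bounds the count
by `Σ min(λᵢ, k)`; colouring the entry in column `j < k` by `j` attains the bound, because a
column read from the bottom row up is non-increasing.
-/

lemma List.Pairwise.swap_adjacent {β : Type*} {R : β → β → Prop} {A B : List β} {p q : β}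
    (h : (A ++ p :: q :: B).Pairwise R) (hqp : R q p) : (A ++ q :: p :: B).Pairwise R := by
  simp only [List.pairwise_append, List.pairwise_cons, List.mem_cons] at h ⊢
  grind

lemma card_filter_univ_eq_countP_ofFn {β : Type*} {n : ℕ} (f : Fin n → β) (p : β → Bool) :
    (Finset.univ.filter fun i => p (f i)).card = (List.ofFn f).countP p := by
  rw [Finset.card_def, Finset.filter_val, ← Multiset.countP_eq_card_filter, Fin.univ_def,
    List.ofFn_eq_map, List.countP_map]
  simp [Multiset.coe_countP, Function.comp_def]

variable {α C : Type*}

/-! ### Colourings with non-increasing colour classes -/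

section Colourings

variable [LinearOrder α]

def MayPrecede (p q : α × Option C) : Prop :=
  ∀ c, p.2 = some c → q.2 = some c → q.1 ≤ p.1

def colouredCount (L : List (α × Option C)) : ℕ :=
  L.countP fun p => p.2.isSome

variable (C) in
def colourCounts (w : List α) : Set ℕ :=
  {N | ∃ L : List (α × Option C),
    L.map Prod.fst = w ∧ L.Pairwise MayPrecede ∧ colouredCount L = N}

@[simp] lemma mayPrecede_none_left (x : α) (q : α × Option C) : MayPrecede (x, none) q := by
  simp [MayPrecede]

@[simp] lemma mayPrecede_none_right (p : α × Option C) (x : α) : MayPrecede p (x, none) := by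
  simp [MayPrecede]

@[simp] lemma mayPrecede_some_right {p : α × Option C} {x : α} {c : C} :
    MayPrecede p (x, some c) ↔ (p.2 = some c → x ≤ p.1) := by
  simp only [MayPrecede, Option.some.injEq]
  exact ⟨fun h hp => h c hp rfl, fun h _ hp hc => by subst hc; exact h hp⟩

@[simp] lemma mayPrecede_some_left {x : α} {c : C} {q : α × Option C} :
    MayPrecede (x, some c) q ↔ (q.2 = some c → q.1 ≤ x) := by
  simp [MayPrecede]

lemma mayPrecede_recolour {σ : C → C} (hσ : σ.Injective) {p q : α × Option C} :
    MayPrecede (Prod.map id (Option.map σ) p) (Prod.map id (Option.map σ) q) ↔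
      MayPrecede p q := by
  obtain ⟨x, _ | a⟩ := p <;> obtain ⟨y, _ | b⟩ := q <;> simp [hσ.eq_iff]

lemma mayPrecede_toDual {p q : α × Option C} :
    MayPrecede (Prod.map OrderDual.toDual id q) (Prod.map OrderDual.toDual id p) ↔
      MayPrecede p q := by
  simp only [MayPrecede, Prod.map_fst, Prod.map_snd, id, OrderDual.toDual_le_toDual]
  exact forall_congr' fun _ => imp.swap

lemma mayPrecede_ofDual {p q : αᵒᵈ × Option C} :
    MayPrecede (Prod.map OrderDual.ofDual id q) (Prod.map OrderDual.ofDual id p) ↔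
      MayPrecede p q := by
  simp only [MayPrecede, Prod.map_fst, Prod.map_snd, id, OrderDual.ofDual_le_ofDual]
  exact forall_congr' fun _ => imp.swap

lemma colourCounts_reverse_map_toDual (w : List α) :
    colourCounts C (w.reverse.map OrderDual.toDual) = colourCounts C w := by
  ext N
  constructor
  · rintro ⟨L, hL, hpw, rfl⟩
    refine ⟨L.reverse.map (Prod.map OrderDual.ofDual id), ?_, ?_, ?_⟩
    · have := congrArg (fun l => (l.map OrderDual.ofDual).reverse) hL
      simpa [List.map_reverse, Function.comp_def] using this
    · rw [List.pairwise_map, List.pairwise_reverse]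
      exact hpw.imp mayPrecede_ofDual.2
    · simp [colouredCount, List.countP_map, List.countP_reverse, Function.comp_def]
  · rintro ⟨L, rfl, hpw, rfl⟩
    refine ⟨L.reverse.map (Prod.map OrderDual.toDual id), ?_, ?_, ?_⟩
    · simp [List.map_reverse]
    · rw [List.pairwise_map, List.pairwise_reverse]
      exact hpw.imp mayPrecede_toDual.2
    · simp [colouredCount, List.countP_map, List.countP_reverse, Function.comp_def]

lemma setOf_colouring_eq_colourCounts (w : List α) :
    {N | ∃ f : Fin w.length → Option C,
        (∀ i j : Fin w.length, i < j → (f i).isSome → f i = f j → w.get j ≤ w.get i) ∧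
        N = (Finset.univ.filter fun i => (f i).isSome).card} = colourCounts C w := by
  ext N
  constructor
  · rintro ⟨f, hf, rfl⟩
    refine ⟨List.ofFn fun i => (w.get i, f i), by simp [Function.comp_def], ?_, ?_⟩
    · exact List.pairwise_ofFn.2 fun i j hij c hi hj =>
        hf i j hij (Option.isSome_iff_exists.2 ⟨c, hi⟩) (hi.trans hj.symm)
    · simp only [colouredCount, card_filter_univ_eq_countP_ofFn f, List.ofFn_eq_map,
        List.countP_map]
      rfl
  · rintro ⟨L, rfl, hpw, rfl⟩
    refine ⟨fun i => (L.get (i.cast (by simp))).2, fun i j hij hi hij' => ?_, ?_⟩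
    · obtain ⟨c, hc⟩ := Option.isSome_iff_exists.1 hi
      simpa using List.pairwise_iff_get.1 hpw (i.cast (by simp)) (j.cast (by simp)) hij c hc
        (hij'.symm.trans hc)
    · rw [card_filter_univ_eq_countP_ofFn (fun i => (L.get (i.cast (by simp))).2) Option.isSome]
      have hsnd : (List.ofFn fun i : Fin (L.map Prod.fst).length =>
          (L.get (i.cast (by simp))).2) = L.map Prod.snd :=
        List.ext_getElem (by simp) (by simp)
      rw [hsnd, List.countP_map]
      rfl

end Colourings

/-! ### Knuth equivalence -/

section Knuth

variable [LinearOrder α]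

lemma colourCounts_subset_of_triple {a b : List α} {x y z x' y' z' : α}
    (h : ∀ (A B : List (α × Option C)) (o₁ o₂ o₃ : Option C),
      (A ++ (x, o₁) :: (y, o₂) :: (z, o₃) :: B).Pairwise MayPrecede →
      ∃ (B' : List (α × Option C)) (o₁' o₂' o₃' : Option C),
        B'.map Prod.fst = B.map Prod.fst ∧
        (A ++ (x', o₁') :: (y', o₂') :: (z', o₃') :: B').Pairwise MayPrecede ∧
        colouredCount ((x', o₁') :: (y', o₂') :: (z', o₃') :: B') =
          colouredCount ((x, o₁) :: (y, o₂) :: (z, o₃) :: B)) :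
    colourCounts C (a ++ x :: y :: z :: b) ⊆ colourCounts C (a ++ x' :: y' :: z' :: b) := by
  rintro N ⟨L, hL, hpw, rfl⟩
  simp only [List.map_eq_append_iff, List.map_eq_cons_iff, Prod.exists] at hL
  obtain ⟨A, _, rfl, rfl, _, o₁, _, rfl, rfl, _, o₂, _, rfl, rfl, _, o₃, B, rfl, rfl, rfl⟩ :=
    hL
  obtain ⟨B', o₁', o₂', o₃', hB', hpw', hcount⟩ := h A B o₁ o₂ o₃ hpw
  refine ⟨A ++ (x', o₁') :: (y', o₂') :: (z', o₃') :: B', by simp [hB'], hpw', ?_⟩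
  simp only [colouredCount, List.countP_append] at hcount ⊢
  rw [hcount]

lemma pairwise_yxz_of_yzx_head_none {A B : List (α × Option C)} {x y z : α} {t : C}
    (hxy : x ≤ y) (hyz : y < z)
    (h : (A ++ (y, none) :: (z, some t) :: (x, some t) :: B).Pairwise MayPrecede) :
    (A ++ (y, some t) :: (x, some t) :: (z, none) :: B).Pairwise MayPrecede := by
  simp only [List.pairwise_append, List.pairwise_cons, List.mem_cons, forall_eq_or_imp,
    mayPrecede_some_left, mayPrecede_some_right, mayPrecede_none_left, mayPrecede_none_right,
    true_and] at h ⊢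
  grind

lemma pairwise_yxz_of_yzx_head_some [DecidableEq C] {A B : List (α × Option C)} {x y z : α}
    {s t : C} (hxy : x ≤ y) (hyz : y < z)
    (h : (A ++ (y, some s) :: (z, some t) :: (x, some t) :: B).Pairwise MayPrecede) :
    (A ++ (y, some s) :: (x, some s) :: (z, some t) ::
      B.map (Prod.map id (Option.map (Equiv.swap s t)))).Pairwise MayPrecede := by
  have swap_eq : ∀ (o : Option C) c,
      o.map (Equiv.swap s t) = some c ↔ o = some (Equiv.swap s t c) := by
    intro o c
    cases o <;> simp [Equiv.swap_apply_eq_iff]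
  simp only [List.pairwise_append, List.pairwise_cons, List.mem_cons, forall_eq_or_imp,
    mayPrecede_some_left, mayPrecede_some_right, List.pairwise_map, List.mem_map,
    forall_exists_index, and_imp, forall_apply_eq_imp_iff₂, Prod.map_fst, Prod.map_snd, id,
    mayPrecede_recolour (Equiv.injective _), swap_eq, Equiv.swap_apply_left,
    Equiv.swap_apply_right] at h ⊢
  obtain ⟨hA, ⟨⟨hzy, -, hyB⟩, -, hxB, hB⟩, hAB⟩ := h
  have hst : s ≠ t := by rintro rfl; exact (hzy rfl).not_gt hyz
  refine ⟨hA, ⟨⟨fun _ => hxy, by simp [hst.symm], fun b hb hbt => (hxB b hb hbt).trans hxy⟩,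
    ⟨by simp [hst.symm], hxB⟩, fun b hb hbs => (hyB b hb hbs).trans hyz.le, hB⟩, ?_⟩
  intro a ha
  obtain ⟨has, hat, -, hAB⟩ := hAB a ha
  refine ⟨has, fun has' => hxy.trans (has has'), hat, fun b hb c hac hbc => ?_⟩
  simp only [swap_eq, Prod.map_snd] at hbc
  by_cases hcs : c = s
  · subst hcs
    rw [Equiv.swap_apply_left] at hbc
    exact (hxB b hb hbc).trans (hxy.trans (has hac))
  by_cases hct : c = t
  · subst hct
    rw [Equiv.swap_apply_right] at hbc
    exact (hyB b hb hbc).trans (hyz.le.trans (hat hac))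
  rw [Equiv.swap_apply_of_ne_of_ne hcs hct] at hbc
  exact hAB b hb c hac hbc

lemma colourCounts_yxz_subset (a b : List α) {x y z : α} (hxy : x ≤ y) (hyz : y < z) :
    colourCounts C (a ++ y :: x :: z :: b) ⊆ colourCounts C (a ++ y :: z :: x :: b) := by
  refine colourCounts_subset_of_triple fun A B o₁ o₂ o₃ h => ⟨B, o₁, o₃, o₂, rfl, ?_, ?_⟩
  · rw [List.append_cons] at h ⊢
    exact h.swap_adjacent fun _ _ _ => hxy.trans hyz.le
  · simp only [colouredCount, List.countP_cons]
    omega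

lemma colourCounts_yzx_subset (a b : List α) {x y z : α} (hxy : x ≤ y) (hyz : y < z) :
    colourCounts C (a ++ y :: z :: x :: b) ⊆ colourCounts C (a ++ y :: x :: z :: b) := by
  classical
  refine colourCounts_subset_of_triple fun A B o₁ o₂ o₃ h => ?_
  by_cases hxz : MayPrecede (x, o₃) (z, o₂)
  · refine ⟨B, o₁, o₃, o₂, rfl, ?_, ?_⟩
    · rw [List.append_cons] at h ⊢
      exact h.swap_adjacent hxz
    · simp only [colouredCount, List.countP_cons]
      omega
  obtain ⟨t, rfl, rfl⟩ : ∃ t, o₂ = some t ∧ o₃ = some t := by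
    simp only [MayPrecede, not_forall] at hxz
    obtain ⟨t, h₃, h₂, -⟩ := hxz
    exact ⟨t, h₂, h₃⟩
  -- `z` and `x` share the colour `t`. If `y` is uncoloured, `t` passes from `z` to `y`;
  -- otherwise `x` takes the colour `s` of `y`, and `s`, `t` are swapped on the rest of the word.
  cases o₁ with
  | none =>
    exact ⟨B, some t, some t, none, rfl, pairwise_yxz_of_yzx_head_none hxy hyz h,
      by simp [colouredCount]⟩
  | some s =>
    refine ⟨B.map (Prod.map id (Option.map (Equiv.swap s t))), some s, some s, some t,
      by simp [Function.comp_def], pairwise_yxz_of_yzx_head_some hxy hyz h, ?_⟩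
    simp [colouredCount, List.countP_map, Function.comp_def]

variable (α) in
inductive KnuthMove : List α → List α → Prop
  | yxz_yzx (a b : List α) {x y z : α} :
      x ≤ y → y < z → KnuthMove (a ++ y :: x :: z :: b) (a ++ y :: z :: x :: b)
  | xzy_zxy (a b : List α) {x y z : α} :
      x < y → y ≤ z → KnuthMove (a ++ x :: z :: y :: b) (a ++ z :: x :: y :: b)

variable (α) in
abbrev KnuthEquiv : List α → List α → Prop := Relation.EqvGen (KnuthMove α)

namespace KnuthMove

lemma append_append {u v : List α} (h : KnuthMove α u v) (c d : List α) :
    KnuthMove α (c ++ u ++ d) (c ++ v ++ d) := by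
  cases h with
  | yxz_yzx a b hxy hyz => simpa using yxz_yzx (c ++ a) (b ++ d) hxy hyz
  | xzy_zxy a b hxy hyz => simpa using xzy_zxy (c ++ a) (b ++ d) hxy hyz

lemma knuthEquiv {u v : List α} (h : KnuthMove α u v) : KnuthEquiv α u v := .rel _ _ h

lemma colourCounts_eq {u v : List α} (h : KnuthMove α u v) :
    colourCounts C u = colourCounts C v := by
  cases h with
  | yxz_yzx a b hxy hyz =>
    exact (colourCounts_yxz_subset a b hxy hyz).antisymm (colourCounts_yzx_subset a b hxy hyz)
  | @xzy_zxy a b x y z hxy hyz =>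
    -- reversing the word and dualising the order turns this move into a `yxz_yzx` move
    have := (colourCounts_yxz_subset (C := C) (b.reverse.map OrderDual.toDual)
      (a.reverse.map OrderDual.toDual) (x := OrderDual.toDual z) (y := OrderDual.toDual y)
      (z := OrderDual.toDual x) hyz hxy).antisymm
      (colourCounts_yzx_subset _ _ hyz hxy)
    rw [← colourCounts_reverse_map_toDual (a ++ x :: z :: y :: b),
      ← colourCounts_reverse_map_toDual (a ++ z :: x :: y :: b)]
    simpa using this

end KnuthMove

namespace KnuthEquiv

variable {u v w : List α}

protected lemma symm (h : KnuthEquiv α u v) : KnuthEquiv α v u := Relation.EqvGen.symm _ _ h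

protected lemma trans (h₁ : KnuthEquiv α u v) (h₂ : KnuthEquiv α v w) : KnuthEquiv α u w :=
  Relation.EqvGen.trans _ _ _ h₁ h₂

lemma append_append (h : KnuthEquiv α u v) (c d : List α) :
    KnuthEquiv α (c ++ u ++ d) (c ++ v ++ d) := by
  induction h with
  | rel _ _ h => exact .rel _ _ (h.append_append c d)
  | refl => exact .refl _
  | symm _ _ _ ih => exact ih.symm
  | trans _ _ _ _ _ ih₁ ih₂ => exact ih₁.trans ih₂

lemma append_left (h : KnuthEquiv α u v) (c : List α) :
    KnuthEquiv α (c ++ u) (c ++ v) := by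
  simpa using h.append_append c []

lemma append_right (h : KnuthEquiv α u v) (d : List α) :
    KnuthEquiv α (u ++ d) (v ++ d) := by
  simpa using h.append_append [] d

lemma colourCounts_eq (h : KnuthEquiv α u v) :
    colourCounts C u = colourCounts C v := by
  induction h with
  | rel _ _ h => exact h.colourCounts_eq
  | refl => rfl
  | symm _ _ _ ih => exact ih.symm
  | trans _ _ _ _ _ ih₁ ih₂ => exact ih₁.trans ih₂

end KnuthEquiv

lemma knuthEquiv_slide {x : α} :
    ∀ {y : α} {v : List α}, (y :: v).Pairwise (· < ·) → x ≤ y →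
      KnuthEquiv α (y :: (v ++ [x])) (y :: x :: v)
  | _, [], _, _ => .refl _
  | y, z :: v, hv, hxy => by
    have hyz : y < z := List.rel_of_pairwise_cons hv List.mem_cons_self
    have ih := knuthEquiv_slide hv.of_cons (hxy.trans hyz.le)
    have hmove : KnuthMove α (y :: x :: z :: v) (y :: z :: x :: v) := by
      simpa using KnuthMove.yxz_yzx [] v hxy hyz
    exact (ih.append_left [y]).trans hmove.knuthEquiv.symm

lemma knuthEquiv_bubble {x y : α} (v : List α) (hxy : x ≤ y) :
    ∀ {u : List α}, u.Pairwise (· < ·) → (∀ w ∈ u, w < x) →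
      KnuthEquiv α (u ++ y :: x :: v) (y :: (u ++ x :: v))
  | [], _, _ => .refl _
  | w :: u, hu, hux => by
    have ih := knuthEquiv_bubble v hxy hu.of_cons fun w' hw' => hux w' (.tail _ hw')
    obtain ⟨h, rest, hrest, hwh, hhy⟩ :
        ∃ h rest, u ++ x :: v = h :: rest ∧ w < h ∧ h ≤ y := by
      cases u with
      | nil => exact ⟨x, v, rfl, hux w List.mem_cons_self, hxy⟩
      | cons h rest =>
        exact ⟨h, rest ++ x :: v, rfl, List.rel_of_pairwise_cons hu List.mem_cons_self,
          (hux h (by simp)).le.trans hxy⟩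
    have hmove : KnuthMove α (w :: y :: (u ++ x :: v)) (y :: w :: (u ++ x :: v)) := by
      simpa [hrest] using KnuthMove.xzy_zxy [] rest hwh hhy
    exact (ih.append_left [w]).trans hmove.knuthEquiv

lemma knuthEquiv_bump {u v : List α} {x y : α} (hr : (u ++ y :: v).Pairwise (· < ·))
    (hux : ∀ w ∈ u, w < x) (hxy : x ≤ y) :
    KnuthEquiv α (u ++ y :: v ++ [x]) (y :: (u ++ x :: v)) := by
  rw [List.pairwise_append] at hr
  have hslide := (knuthEquiv_slide hr.2.1 hxy).append_left u
  rw [List.append_assoc, List.cons_append]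
  exact hslide.trans (knuthEquiv_bubble v hxy hr.1 hux)

end Knuth

/-! ### Tableaux and their reading words -/

section Tableaux

def readingWord (T : List (List α)) : List α := T.reverse.flatten

@[simp] lemma readingWord_nil : readingWord ([] : List (List α)) = [] := rfl

@[simp] lemma readingWord_cons (r : List α) (T : List (List α)) :
    readingWord (r :: T) = readingWord T ++ r := by
  simp [readingWord]

def columnColour (k j : ℕ) : Option (Fin k) :=
  if h : j < k then some ⟨j, h⟩ else none

def rowColouring (k : ℕ) (r : List α) : List (α × Option (Fin k)) :=
  r.mapIdx fun j a => (a, columnColour k j)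

lemma map_fst_rowColouring (k : ℕ) (r : List α) : (rowColouring k r).map Prod.fst = r := by
  simp [rowColouring, List.ext_getElem?_iff, Function.comp_def]

lemma colouredCount_rowColouring (k : ℕ) (r : List α) :
    colouredCount (rowColouring k r) = min r.length k := by
  induction r using List.reverseRecOn with
  | nil => simp [colouredCount, rowColouring]
  | append_singleton r a ih =>
    simp only [colouredCount, rowColouring] at ih ⊢
    rw [List.mapIdx_concat, List.countP_append, ih]
    by_cases h : r.length < k <;> simp [columnColour, h] <;> omega

variable [LinearOrder α]

def LiesAbove (r r' : List α) : Prop :=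
  r'.length ≤ r.length ∧ ∀ (j : ℕ) (a b : α), r[j]? = some a → r'[j]? = some b → a ≤ b

def IsTableau (T : List (List α)) : Prop :=
  (∀ r ∈ T, r.Pairwise (· < ·)) ∧ T.IsChain LiesAbove

lemma liesAbove_nil (r : List α) : LiesAbove r [] := ⟨by simp, by simp⟩

instance : IsTrans (List α) LiesAbove where
  trans r₁ r₂ r₃ h₁₂ h₂₃ := by
    refine ⟨h₂₃.1.trans h₁₂.1, fun j a c ha hc => ?_⟩
    obtain ⟨hj, -⟩ := List.getElem?_eq_some_iff.1 hc
    have hb := List.getElem?_eq_getElem (hj.trans_le h₂₃.1)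
    exact (h₁₂.2 j a _ ha hb).trans (h₂₃.2 j _ c hb hc)

lemma isTableau_cons {r : List α} {T : List (List α)} :
    IsTableau (r :: T) ↔
      r.Pairwise (· < ·) ∧ (∀ r' ∈ T.head?, LiesAbove r r') ∧ IsTableau T := by
  simp only [IsTableau, List.mem_cons, forall_eq_or_imp, List.isChain_cons]
  tauto

lemma pairwise_rowColouring (k : ℕ) (r : List α) :
    (rowColouring k r).Pairwise MayPrecede := by
  rw [List.pairwise_iff_getElem]
  intro i j hi hj hij c hci hcj
  simp only [rowColouring, List.getElem_mapIdx, columnColour] at hci hcj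
  split_ifs at hci hcj
  cases hci; cases hcj
  simp at hij

lemma mayPrecede_rowColouring_of_liesAbove {k : ℕ} {r r' : List α} (h : LiesAbove r r') :
    ∀ p ∈ rowColouring k r', ∀ q ∈ rowColouring k r, MayPrecede p q := by
  simp only [rowColouring, List.mem_mapIdx]
  rintro _ ⟨i, hi, rfl⟩ _ ⟨j, hj, rfl⟩ c hci hcj
  simp only [columnColour] at hci hcj
  split_ifs at hci hcj
  cases hci; cases hcj
  exact h.2 i _ _ (List.getElem?_eq_getElem hj) (List.getElem?_eq_getElem hi)

lemma sum_min_mem_colourCounts_readingWord {T : List (List α)} (hT : IsTableau T) (k : ℕ) :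
    (T.map fun r => min r.length k).sum ∈ colourCounts (Fin k) (readingWord T) := by
  refine ⟨(T.reverse.map (rowColouring k)).flatten, ?_, ?_, ?_⟩
  · simp [readingWord, List.map_flatten, Function.comp_def, map_fst_rowColouring]
  · rw [List.pairwise_flatten, List.pairwise_map, List.pairwise_reverse]
    refine ⟨by simpa using fun r _ => pairwise_rowColouring k r, ?_⟩
    exact (List.isChain_iff_pairwise.1 hT.2).imp mayPrecede_rowColouring_of_liesAbove
  · simp only [colouredCount, List.countP_flatten, List.map_map, List.map_reverse,
      List.sum_reverse]
    exact congrArg List.sum (List.map_congr_left fun r _ => colouredCount_rowColouring k r)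

lemma colouredCount_le_card_of_pairwise_lt [Fintype C] {L : List (α × Option C)}
    (hlt : (L.map Prod.fst).Pairwise (· < ·)) (hpw : L.Pairwise MayPrecede) :
    colouredCount L ≤ Fintype.card C := by
  have hnodup : (L.filterMap Prod.snd).Nodup := by
    refine ((List.pairwise_map.1 hlt).and hpw).filterMap _ ?_
    rintro p q ⟨hpq, hmay⟩ c hc c' hc' rfl
    exact (hmay c hc hc').not_gt hpq
  simpa [colouredCount, List.length_filterMap_eq_countP] using hnodup.length_le_card

lemma le_of_mem_colourCounts_readingWord [Fintype C] {T : List (List α)}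
    (hT : ∀ r ∈ T, r.Pairwise (· < ·)) {N : ℕ} (hN : N ∈ colourCounts C (readingWord T)) :
    N ≤ (T.map fun r => min r.length (Fintype.card C)).sum := by
  induction T generalizing N with
  | nil =>
    obtain ⟨L, hL, -, rfl⟩ := hN
    rw [readingWord_nil, List.map_eq_nil_iff] at hL
    simp [hL, colouredCount]
  | cons r T ih =>
    obtain ⟨L, hL, hpw, rfl⟩ := hN
    rw [readingWord_cons, List.map_eq_append_iff] at hL
    obtain ⟨L₁, L₂, rfl, hL₁, rfl⟩ := hL
    rw [List.pairwise_append] at hpw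
    have h₁ := ih (fun r' hr' => hT r' (List.mem_cons_of_mem _ hr')) ⟨L₁, hL₁, hpw.1, rfl⟩
    have h₂ : colouredCount L₂ ≤ min L₂.length (Fintype.card C) :=
      le_min List.countP_le_length
        (colouredCount_le_card_of_pairwise_lt (hT _ List.mem_cons_self) hpw.2.1)
    simp only [colouredCount, List.countP_append, List.map_cons, List.sum_cons,
      List.length_map] at h₁ h₂ ⊢
    omega

end Tableaux

/-! ### Row insertion -/

section RowInsertion

variable [LinearOrder α]

lemma forall_lt_or_exists_bump (x : α) (r : List α) :
    (∀ w ∈ r, w < x) ∨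
      ∃ (j : ℕ) (hj : j < r.length), x ≤ r[j] ∧ ∀ (m : ℕ) (hm : m < j), r[m] < x := by
  cases hfi : r.findIdx? (fun w => decide (x ≤ w)) with
  | none => exact .inl fun w hw => by simpa using List.findIdx?_eq_none_iff.1 hfi w hw
  | some j =>
    obtain ⟨hj, hxj, hlt⟩ := List.findIdx?_eq_some_iff_getElem.1 hfi
    exact .inr ⟨j, hj, by simpa using hxj, fun m hm => by simpa using hlt m hm⟩

lemma pairwise_append_singleton {r : List α} {x : α} (hr : r.Pairwise (· < ·))
    (h : ∀ w ∈ r, w < x) : (r ++ [x]).Pairwise (· < ·) :=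
  List.pairwise_append.2 ⟨hr, List.pairwise_singleton _ _, fun w hw _ hx => by
    rw [List.mem_singleton.1 hx]; exact h w hw⟩

lemma pairwise_set_of_bump {r : List α} {x : α} {j : ℕ} (hr : r.Pairwise (· < ·))
    (hj : j < r.length) (hxj : x ≤ r[j]) (hlt : ∀ (m : ℕ) (hm : m < j), r[m] < x) :
    (r.set j x).Pairwise (· < ·) := by
  rw [List.pairwise_iff_getElem] at hr ⊢
  intro m n hm hn hmn
  simp only [List.length_set] at hm hn
  simp only [List.getElem_set]
  split_ifs with h₁ h₂ h₂
  · omega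
  · subst h₁; exact hxj.trans_lt (hr _ _ hj hn hmn)
  · subst h₂; exact hlt m hmn
  · exact hr _ _ hm hn hmn

lemma liesAbove_append_singleton {r r₀ : List α} (h : LiesAbove r r₀) (x : α) :
    LiesAbove (r ++ [x]) r₀ := by
  refine ⟨by simpa using h.1.trans (Nat.le_succ _), fun j a b ha hb => h.2 j a b ?_ hb⟩
  have hj : j < r.length := (List.getElem?_eq_some_iff.1 hb).1.trans_le h.1
  rwa [List.getElem?_append_left hj] at ha

-- `r₀'` is `r₀` with the entry `r[j]` bumped out of `r` written at position `q`.
lemma liesAbove_set_of_bump {r r₀ r₀' : List α} {j q : ℕ} {x : α} (hr : r.Pairwise (· < ·))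
    (h : LiesAbove r r₀) (hj : j < r.length) (hxj : x ≤ r[j]) (hqj : q ≤ j)
    (hlen : r₀'.length ≤ max r₀.length (q + 1))
    (hr₀' : ∀ m b, r₀'[m]? = some b → r₀[m]? = some b ∨ m = q ∧ b = r[j]) :
    LiesAbove (r.set j x) r₀' := by
  refine ⟨by simp only [List.length_set]; have := h.1; omega, fun m a b ha hb => ?_⟩
  rw [List.getElem?_set] at ha
  rcases hr₀' m b hb with hb | ⟨rfl, rfl⟩
  · split_ifs at ha with hjm
    · subst hjm
      cases ha
      exact hxj.trans (h.2 j _ b (List.getElem?_eq_getElem hj) hb)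
    · exact h.2 m a b ha hb
  · split_ifs at ha with hjm
    · cases ha; exact hxj
    · obtain ⟨hm, rfl⟩ := List.getElem?_eq_some_iff.1 ha
      exact (List.pairwise_iff_getElem.1 hr _ _ hm hj (by omega)).le

end RowInsertion

lemma rowInsert_cons_of_forall_lt {x : ℤ} {r : List ℤ} (rs : List (List ℤ))
    (h : ∀ w ∈ r, w < x) : rowInsert x (r :: rs) = (r ++ [x]) :: rs := by
  have : r.findIdx? (fun w => decide (x ≤ w)) = none :=
    List.findIdx?_eq_none_iff.2 fun w hw => by simpa using h w hw
  simp [rowInsert, this]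

lemma rowInsert_cons_of_bump {x : ℤ} {r : List ℤ} (rs : List (List ℤ)) {j : ℕ}
    (hj : j < r.length) (hxj : x ≤ r[j]) (hlt : ∀ (m : ℕ) (hm : m < j), r[m] < x) :
    rowInsert x (r :: rs) = r.set j x :: rowInsert r[j] rs := by
  have : r.findIdx? (fun w => decide (x ≤ w)) = some j :=
    List.findIdx?_eq_some_iff_getElem.2
      ⟨hj, by simpa using hxj, fun m hm => by simpa using hlt m hm⟩
  simp [rowInsert, this, List.getElem?_eq_getElem hj]

lemma liesAbove_head_rowInsert {r : List ℤ} {rs : List (List ℤ)} {x : ℤ} {j : ℕ}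
    (hr : r.Pairwise (· < ·)) (hrs : ∀ r₀ ∈ rs.head?, LiesAbove r r₀) (hj : j < r.length)
    (hxj : x ≤ r[j]) : ∀ r₀' ∈ (rowInsert r[j] rs).head?, LiesAbove (r.set j x) r₀' := by
  cases rs with
  | nil =>
    simp only [rowInsert, List.head?_cons, Option.mem_def, Option.some.injEq, forall_eq']
    refine liesAbove_set_of_bump hr (liesAbove_nil r) hj hxj j.zero_le (by simp)
      fun m b hb => ?_
    obtain ⟨hm, rfl⟩ := List.getElem?_eq_some_iff.1 hb
    simp only [List.length_singleton, Nat.lt_one_iff] at hm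
    simp [hm]
  | cons r₀ rs =>
    have h₀ := hrs r₀ rfl
    have hcol : ∀ (hj₀ : j < r₀.length), r[j] ≤ r₀[j] :=
      fun hj₀ => h₀.2 j _ _ (List.getElem?_eq_getElem hj) (List.getElem?_eq_getElem hj₀)
    rcases forall_lt_or_exists_bump r[j] r₀ with hlt | ⟨q, hq, hyq, hlt⟩
    · rw [rowInsert_cons_of_forall_lt rs hlt]
      have hqj : r₀.length ≤ j :=
        not_lt.1 fun hj₀ => (hcol hj₀).not_gt (hlt _ (List.getElem_mem hj₀))
      refine fun r₀' hr₀' => liesAbove_set_of_bump hr h₀ hj hxj hqj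
        (by simp [(Option.some.inj hr₀').symm]) fun m b hb => ?_
      rw [← Option.some.inj hr₀', List.getElem?_append] at hb
      split_ifs at hb with hm
      · exact .inl hb
      · obtain ⟨hm', rfl⟩ := List.getElem?_eq_some_iff.1 hb
        simp only [List.length_singleton] at hm'
        exact .inr ⟨by omega, by simp⟩
    · rw [rowInsert_cons_of_bump rs hq hyq hlt]
      have hqj : q ≤ j := not_lt.1 fun hjq => (hcol (hjq.trans hq)).not_gt (hlt j hjq)
      refine fun r₀' hr₀' => liesAbove_set_of_bump hr h₀ hj hxj hqj
        (by simp [(Option.some.inj hr₀').symm]) fun m b hb => ?_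
      rw [← Option.some.inj hr₀', List.getElem?_set] at hb
      split_ifs at hb with hqm
      · exact .inr ⟨hqm.symm, (Option.some.inj hb).symm⟩
      · exact .inl hb

lemma isTableau_rowInsert (x : ℤ) {T : List (List ℤ)} (hT : IsTableau T) :
    IsTableau (rowInsert x T) := by
  induction T generalizing x with
  | nil => simp [rowInsert, IsTableau]
  | cons r rs ih =>
    obtain ⟨hr, hhead, hrs⟩ := isTableau_cons.1 hT
    rcases forall_lt_or_exists_bump x r with hlt | ⟨j, hj, hxj, hlt⟩
    · rw [rowInsert_cons_of_forall_lt rs hlt]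
      exact isTableau_cons.2 ⟨pairwise_append_singleton hr hlt,
        fun r₀ h => liesAbove_append_singleton (hhead r₀ h) x, hrs⟩
    · rw [rowInsert_cons_of_bump rs hj hxj hlt]
      exact isTableau_cons.2 ⟨pairwise_set_of_bump hr hj hxj hlt,
        liesAbove_head_rowInsert hr hhead hj hxj, ih _ hrs⟩

lemma knuthEquiv_readingWord_rowInsert (x : ℤ) {T : List (List ℤ)}
    (hT : ∀ r ∈ T, r.Pairwise (· < ·)) :
    KnuthEquiv ℤ (readingWord (rowInsert x T)) (readingWord T ++ [x]) := by
  induction T generalizing x with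
  | nil => exact .refl _
  | cons r rs ih =>
    have hr := hT r List.mem_cons_self
    have hrs := fun r' hr' => hT r' (List.mem_cons_of_mem r hr')
    rcases forall_lt_or_exists_bump x r with hlt | ⟨j, hj, hxj, hlt⟩
    · rw [rowInsert_cons_of_forall_lt rs hlt]
      simpa using .refl _
    · rw [rowInsert_cons_of_bump rs hj hxj hlt]
      have hsplit : r = r.take j ++ r[j] :: r.drop (j + 1) := by
        rw [← List.drop_eq_getElem_cons hj, List.take_append_drop]
      have hset : r.set j x = r.take j ++ x :: r.drop (j + 1) := by
        rw [List.set_eq_take_append_cons_drop, if_pos hj]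
      have hux : ∀ w ∈ r.take j, w < x := by
        intro w hw
        obtain ⟨m, hm, rfl⟩ := List.mem_take_iff_getElem.1 hw
        exact hlt m (lt_min_iff.1 hm).1
      have hbump := knuthEquiv_bump (hsplit ▸ hr) hux hxj
      rw [← hsplit, ← hset] at hbump
      have h₁ := (ih r[j] hrs).append_right (r.set j x)
      have h₂ := hbump.symm.append_left (readingWord rs)
      simp only [readingWord_cons, List.append_assoc, List.singleton_append] at h₁ h₂ ⊢
      exact h₁.trans h₂

lemma ins_append_singleton (w : List ℤ) (x : ℤ) : ins (w ++ [x]) = rowInsert x (ins w) := by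
  simp [ins]

lemma isTableau_ins (w : List ℤ) : IsTableau (ins w) := by
  induction w using List.reverseRecOn with
  | nil => exact ⟨by simp [ins], List.isChain_nil⟩
  | append_singleton w x ih => rw [ins_append_singleton]; exact isTableau_rowInsert x ih

lemma knuthEquiv_readingWord_ins (w : List ℤ) : KnuthEquiv ℤ (readingWord (ins w)) w := by
  induction w using List.reverseRecOn with
  | nil => exact .refl _
  | append_singleton w x ih =>
    rw [ins_append_singleton]
    exact (knuthEquiv_readingWord_rowInsert x (isTableau_ins w).1).trans (ih.append_right [x])

/-- The dual Greene theorem: for every `k`, the maximum total length of a subsequence of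
`r` that can be decomposed into `k` non-increasing subsequences equals `α_k^*(Ins(r))`,
the number of boxes in the first `k` columns of the insertion tableau, i.e.
`Σ_i min(λ_i, k)` where `λ` is the shape of `Ins(r)`. -/
theorem greene_dual (r : List ℤ) (k : ℕ) :
    IsGreatest {N | ∃ f : Fin r.length → Option (Fin k),
        (∀ i j : Fin r.length, i < j → (f i).isSome → f i = f j → r.get j ≤ r.get i) ∧
        N = (Finset.univ.filter fun i => (f i).isSome).card}
      (((ins r).map fun row => min row.length k).sum) := by
  rw [setOf_colouring_eq_colourCounts, ← (knuthEquiv_readingWord_ins r).colourCounts_eq]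
  refine ⟨sum_min_mem_colourCounts_readingWord (isTableau_ins r) k, fun N hN => ?_⟩
  simpa using le_of_mem_colourCounts_readingWord (isTableau_ins r).1 hN
end

section
/- If two finite integer sequences r and s differ by a single Knuth relation, then for every k the maximum total length of a subsequence decomposable into k strictly increasing subsequences is the same for r and for s. -/
/-- The maximum total length of a subsequence of `r` that can be decomposed into `k`
strictly increasing subsequences (encoded by partial colorings of the index set). -/
noncomputable def maxIncDecomp (k : ℕ) (r : List ℤ) : ℕ :=
  sSup {N | ∃ f : Fin r.length → Option (Fin k),
      (∀ i j : Fin r.length, i < j → (f i).isSome → f i = f j → r.get i < r.get j) ∧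
      N = (Finset.univ.filter fun i => (f i).isSome).card}

/-- Two sequences differ by a single Knuth relation: one is obtained from the other by
replacing a consecutive triple `y,z,w` by `y,w,z` (where `z ≤ y < w`), or by replacing a
consecutive triple `z,w,y` by `w,z,y` (where `z < y ≤ w`). -/
def KnuthRelated (r s : List ℤ) : Prop :=
  (∃ (u v : List ℤ) (y z w : ℤ), z ≤ y ∧ y < w ∧
      r = u ++ [y, z, w] ++ v ∧ s = u ++ [y, w, z] ++ v) ∨
  (∃ (u v : List ℤ) (y z w : ℤ), z < y ∧ y ≤ w ∧
      r = u ++ [z, w, y] ++ v ∧ s = u ++ [w, z, y] ++ v)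



namespace KnuthAux

def Valid (k : ℕ) (ρ : ℕ → ℤ) (L : ℕ) (f : ℕ → Option (Fin k)) : Prop :=
  ∀ i j : ℕ, i < j → j < L → (f i).isSome → f i = f j → ρ i < ρ j

def cnt (L : ℕ) {k : ℕ} (f : ℕ → Option (Fin k)) : ℕ :=
  ((Finset.range L).filter fun i => (f i).isSome).card

def SN (k : ℕ) (ρ : ℕ → ℤ) (L : ℕ) : Set ℕ :=
  {N | ∃ f : ℕ → Option (Fin k), Valid k ρ L f ∧ N = cnt L f}

lemma valid_congr {k L} {ρ ρ' : ℕ → ℤ} (h : ∀ i < L, ρ i = ρ' i)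
    {f : ℕ → Option (Fin k)} (hf : Valid k ρ L f) : Valid k ρ' L f := by
  intro i j hij hj hs he
  rw [← h i (hij.trans hj), ← h j hj]
  exact hf i j hij hj hs he

lemma cnt_reindex {k L} (f : ℕ → Option (Fin k)) (π π' : ℕ → ℕ)
    (hπ : ∀ i < L, π i < L) (hπ' : ∀ i < L, π' i < L)
    (h1 : ∀ i < L, π' (π i) = i) (h2 : ∀ i < L, π (π' i) = i) :
    cnt L (fun i => f (π i)) = cnt L f := by
  apply Finset.card_bij (fun a _ => π a)
  · intro a ha
    simp only [Finset.mem_filter, Finset.mem_range] at ha ⊢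
    exact ⟨hπ a ha.1, ha.2⟩
  · intro a ha b hb hab
    simp only [Finset.mem_filter, Finset.mem_range] at ha hb
    rw [← h1 a ha.1, ← h1 b hb.1, hab]
  · intro b hb
    simp only [Finset.mem_filter, Finset.mem_range] at hb ⊢
    exact ⟨π' b, ⟨hπ' b hb.1, by rw [h2 b hb.1]; exact hb.2⟩, h2 b hb.1⟩

lemma maxIncDecomp_eq_aux (k : ℕ) (r : List ℤ) :
    {N | ∃ f : Fin r.length → Option (Fin k),
      (∀ i j : Fin r.length, i < j → (f i).isSome → f i = f j → r.get i < r.get j) ∧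
      N = (Finset.univ.filter fun i => (f i).isSome).card}
    = SN k (fun i => r.getD i 0) r.length := by
  ext N
  constructor
  · rintro ⟨f, hf, rfl⟩
    refine ⟨fun i => if h : i < r.length then f ⟨i, h⟩ else none, ?_, ?_⟩
    · intro i j hij hj hs he
      have hi : i < r.length := hij.trans hj
      simp only [dif_pos hi, dif_pos hj] at hs he
      have := hf ⟨i, hi⟩ ⟨j, hj⟩ hij hs he
      simp only []
      rw [List.getD_eq_getElem _ _ hi, List.getD_eq_getElem _ _ hj]
      simpa [List.get_eq_getElem] using this
    · apply Finset.card_bij (fun (a : Fin r.length) _ => (a : ℕ))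
      · intro a ha
        simp only [Finset.mem_filter, Finset.mem_univ, Finset.mem_range, true_and] at ha ⊢
        exact ⟨a.2, by simpa [dif_pos a.2] using ha⟩
      · intro a _ b _ hab
        exact Fin.val_injective hab
      · intro b hb
        simp only [Finset.mem_filter, Finset.mem_range] at hb
        exact ⟨⟨b, hb.1⟩, by simpa [dif_pos hb.1] using hb.2, rfl⟩
  · rintro ⟨f, hf, rfl⟩
    refine ⟨fun i => f i, ?_, ?_⟩
    · intro i j hij hs he
      have := hf i j hij j.2 hs he
      simp only [] at this
      rw [List.getD_eq_getElem _ _ i.2, List.getD_eq_getElem _ _ j.2] at this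
      simpa [List.get_eq_getElem] using this
    · symm
      apply Finset.card_bij (fun (a : Fin r.length) _ => (a : ℕ))
      · intro a ha
        simp only [Finset.mem_filter, Finset.mem_univ, Finset.mem_range, true_and] at ha ⊢
        exact ⟨a.2, ha⟩
      · intro a _ b _ hab
        exact Fin.val_injective hab
      · intro b hb
        simp only [Finset.mem_filter, Finset.mem_range] at hb
        exact ⟨⟨b, hb.1⟩, by simpa using hb.2, rfl⟩

lemma swap_move (k L m : ℕ) (ρ σ : ℕ → ℤ) (hm : m + 1 < L)
    (hσ1 : σ m = ρ (m+1)) (hσ2 : σ (m+1) = ρ m)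
    (hag : ∀ i < L, i ≠ m → i ≠ m+1 → σ i = ρ i)
    (f : ℕ → Option (Fin k)) (hf : Valid k ρ L f)
    (hside : (f (m+1)).isSome → f (m+1) = f m → ρ (m+1) < ρ m) :
    ∃ g : ℕ → Option (Fin k), Valid k σ L g ∧ cnt L g = cnt L f := by
  refine ⟨fun i => if i = m then f (m+1) else if i = m+1 then f m else f i, ?_, ?_⟩
  · intro i j hij hj hs he
    have hs' : (if i = m then f (m+1) else if i = m+1 then f m else f i).isSome := hs
    have he' : (if i = m then f (m+1) else if i = m+1 then f m else f i)
        = (if j = m then f (m+1) else if j = m+1 then f m else f j) := he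
    clear hs he
    show σ i < σ j
    by_cases him : i = m
    · rw [if_pos him] at hs' he'
      by_cases hjm1 : j = m+1
      · rw [if_neg (by omega), if_pos hjm1] at he'
        rw [him, hjm1, hσ1, hσ2]
        exact hside hs' he'
      · have hjm : j ≠ m := by omega
        rw [if_neg hjm, if_neg hjm1] at he'
        rw [him, hσ1, hag j hj hjm hjm1]
        exact hf (m+1) j (by omega) hj hs' he'
    · by_cases him1 : i = m+1
      · rw [if_neg him, if_pos him1] at hs' he'
        have hjm : j ≠ m := by omega
        have hjm1 : j ≠ m+1 := by omega
        rw [if_neg hjm, if_neg hjm1] at he'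
        rw [him1, hσ2, hag j hj hjm hjm1]
        exact hf m j (by omega) hj hs' he'
      · rw [if_neg him, if_neg him1] at hs' he'
        by_cases hjm : j = m
        · rw [if_pos hjm] at he'
          rw [hag i (by omega) him him1, hjm, hσ1]
          exact hf i (m+1) (by omega) hm hs' he'
        · by_cases hjm1 : j = m+1
          · rw [if_neg hjm, if_pos hjm1] at he'
            rw [hag i (by omega) him him1, hjm1, hσ2]
            exact hf i m (by omega) (by omega) hs' he'
          · rw [if_neg hjm, if_neg hjm1] at he'
            rw [hag i (by omega) him him1, hag j hj hjm hjm1]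
            exact hf i j hij hj hs' he'
  · have hfun : (fun i => if i = m then f (m+1) else if i = m+1 then f m else f i)
        = fun i => f (if i = m then m+1 else if i = m+1 then m else i) := by
      funext i; split_ifs <;> rfl
    rw [hfun]
    refine cnt_reindex f _ (fun i => if i = m then m+1 else if i = m+1 then m else i)
      ?_ ?_ ?_ ?_ <;> intro i hi <;> beta_reduce <;> split_ifs <;> omega

lemma rev_move (k L : ℕ) (ρ : ℕ → ℤ) (f : ℕ → Option (Fin k)) (hf : Valid k ρ L f) :
    ∃ g : ℕ → Option (Fin k), Valid k (fun i => -ρ (L - 1 - i)) L g ∧ cnt L g = cnt L f := by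
  refine ⟨fun i => f (L - 1 - i), ?_, ?_⟩
  · intro i j hij hj hs he
    have hs' : (f (L - 1 - i)).isSome := hs
    have he' : f (L - 1 - i) = f (L - 1 - j) := he
    have hs2 : (f (L - 1 - j)).isSome := by rw [← he']; exact hs'
    have := hf (L-1-j) (L-1-i) (by omega) (by omega) hs2 he'.symm
    show -ρ (L-1-i) < -ρ (L-1-j)
    omega
  · exact cnt_reindex f (fun i => L - 1 - i) (fun i => L - 1 - i)
      (fun i hi => by beta_reduce; omega) (fun i hi => by beta_reduce; omega) (fun i hi => by beta_reduce; omega) (fun i hi => by beta_reduce; omega)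

lemma getD_abc (u v : List ℤ) (a b c : ℤ) (i : ℕ) :
    (u ++ [a,b,c] ++ v).getD i 0 =
    if i < u.length then u.getD i 0 else if i = u.length then a
    else if i = u.length + 1 then b else if i = u.length + 2 then c
    else v.getD (i - (u.length+3)) 0 := by
  rw [List.append_assoc]
  by_cases h1 : i < u.length
  · rw [if_pos h1, List.getD_append _ _ _ _ h1]
  · rw [if_neg h1, List.getD_append_right _ _ _ _ (by omega)]
    by_cases h2 : i < u.length + 3
    · rw [List.getD_append _ _ _ _ (by simp; omega)]
      rcases (by omega : i = u.length ∨ i = u.length + 1 ∨ i = u.length + 2) with h|h|h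
      · rw [h, if_pos rfl, Nat.sub_self]; rfl
      · rw [h, if_neg (by omega), if_pos rfl, (by omega : u.length + 1 - u.length = 1)]; rfl
      · rw [h, if_neg (by omega), if_neg (by omega), if_pos rfl,
          (by omega : u.length + 2 - u.length = 2)]; rfl
    · rw [List.getD_append_right _ _ _ _ (by simp; omega), if_neg (by omega),
        if_neg (by omega), if_neg (by omega)]
      have : i - u.length - [a,b,c].length = i - (u.length + 3) := by
        simp only [List.length_cons, List.length_nil]; omega
      rw [this]

lemma length_abc (u v : List ℤ) (a b c : ℤ) :
    (u ++ [a,b,c] ++ v).length = u.length + 3 + v.length := by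
  simp [List.length_append]; omega

lemma moveA1 (k L n : ℕ) (ρ σ : ℕ → ℤ) (hn : n + 2 < L)
    (h1 : ρ (n+1) ≤ ρ n) (h2 : ρ n < ρ (n+2))
    (hσ1 : σ (n+1) = ρ (n+2)) (hσ2 : σ (n+2) = ρ (n+1))
    (hag : ∀ i < L, i ≠ n+1 → i ≠ n+2 → σ i = ρ i)
    (f : ℕ → Option (Fin k)) (hf : Valid k ρ L f) :
    ∃ g : ℕ → Option (Fin k), Valid k σ L g ∧ cnt L g = cnt L f := by
  by_cases hc : (f (n+1)).isSome ∧ f (n+1) = f (n+2)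
  · -- z and w share a color c
    obtain ⟨hs1, heq12⟩ := hc
    obtain ⟨c, hc1⟩ := Option.isSome_iff_exists.mp hs1
    have hc2 : f (n+2) = some c := heq12.symm.trans hc1
    have hfn : f n ≠ some c := by
      intro h
      have := hf n (n+1) (by omega) (by omega) (by rw [h]; rfl) (by rw [h, hc1])
      omega
    by_cases hy : (f n).isSome
    · -- y has a color c' ≠ c
      obtain ⟨c', hc'⟩ := Option.isSome_iff_exists.mp hy
      have hcc' : c' ≠ c := fun h => hfn (h ▸ hc')
      set τ : Equiv.Perm (Fin k) := Equiv.swap c c' with hτ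
      have hτc : τ c = c' := Equiv.swap_apply_left c c'
      have hτc' : τ c' = c := Equiv.swap_apply_right c c'
      have hτd : ∀ d, d ≠ c → d ≠ c' → τ d = d := fun d h h' =>
        Equiv.swap_apply_of_ne_of_ne h h'
      set g : ℕ → Option (Fin k) := fun p => if p < n then f p else
        Option.map τ (f (if p = n then n+1 else if p = n+1 then n+2
          else if p = n+2 then n else p)) with hg
      have hgP : ∀ p, p < n → g p = f p := fun p hp => by
        rw [hg]; beta_reduce; rw [if_pos hp]
      have hgn : g n = some c' := by
        rw [hg]; beta_reduce
        rw [if_neg (by omega), if_pos rfl, hc1, Option.map_some, hτc]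
      have hgn1 : g (n+1) = some c' := by
        rw [hg]; beta_reduce
        rw [if_neg (by omega), if_neg (by omega), if_pos rfl, hc2, Option.map_some, hτc]
      have hgn2 : g (n+2) = some c := by
        rw [hg]; beta_reduce
        rw [if_neg (by omega), if_neg (by omega), if_neg (by omega), if_pos rfl, hc',
          Option.map_some, hτc']
      have hgS : ∀ p, n + 2 < p → g p = Option.map τ (f p) := fun p hp => by
        rw [hg]; beta_reduce
        rw [if_neg (by omega), if_neg (by omega), if_neg (by omega), if_neg (by omega)]
      refine ⟨g, ?_, ?_⟩
      · intro i j hij hj hs he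
        show σ i < σ j
        by_cases hi0 : i < n
        · rw [hgP i hi0] at hs he
          by_cases hjn : j = n
          · rw [hjn] at he ⊢
            rw [hgn] at he
            have := hf i n (by omega) (by omega) hs (he.trans hc'.symm)
            rw [hag i (by omega) (by omega) (by omega), hag n (by omega) (by omega) (by omega)]
            exact this
          · by_cases hjn1 : j = n+1
            · rw [hjn1] at he ⊢
              rw [hgn1] at he
              have := hf i n (by omega) (by omega) hs (he.trans hc'.symm)
              rw [hag i (by omega) (by omega) (by omega), hσ1]
              omega
            · by_cases hjn2 : j = n+2
              · rw [hjn2] at he ⊢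
                rw [hgn2] at he
                have := hf i (n+1) (by omega) (by omega) hs (he.trans hc1.symm)
                rw [hag i (by omega) (by omega) (by omega), hσ2]
                exact this
              · by_cases hj0 : j < n
                · rw [hgP j hj0] at he
                  rw [hag i (by omega) (by omega) (by omega), hag j hj (by omega) (by omega)]
                  exact hf i j hij hj hs he
                · have hjS : n + 2 < j := by omega
                  rw [hgS j hjS] at he
                  have hjsome : (f j).isSome := by
                    have hh : (Option.map τ (f j)).isSome := by rw [← he]; exact hs
                    simpa using hh
                  obtain ⟨d, hd⟩ := Option.isSome_iff_exists.mp hjsome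
                  rw [hag i (by omega) (by omega) (by omega), hag j hj (by omega) (by omega)]
                  rw [hd, Option.map_some] at he
                  by_cases hdc : d = c
                  · rw [hdc, hτc] at he
                    have e1 := hf i n (by omega) (by omega) hs (he.trans hc'.symm)
                    have e2 := hf (n+2) j (by omega) hj (by rw [hc2]; rfl)
                      (by rw [hc2, hd, hdc])
                    omega
                  · by_cases hdc' : d = c'
                    · rw [hdc', hτc'] at he
                      have e1 := hf i (n+1) (by omega) (by omega) hs (he.trans hc1.symm)
                      have e2 := hf n j (by omega) hj (by rw [hc']; rfl)
                        (by rw [hc', hd, hdc'])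
                      omega
                    · rw [hτd d hdc hdc'] at he
                      exact hf i j hij hj hs (he.trans hd.symm)
        · by_cases hin : i = n
          · rw [hin] at he hs ⊢
            by_cases hjn1 : j = n+1
            · rw [hjn1] at he ⊢
              rw [hag n (by omega) (by omega) (by omega), hσ1]
              omega
            · by_cases hjn2 : j = n+2
              · rw [hjn2] at he
                rw [hgn, hgn2] at he
                exact absurd (Option.some.inj he) hcc'
              · have hjS : n + 2 < j := by omega
                rw [hgn, hgS j hjS] at he
                have hjsome : (f j).isSome := by
                  have hh : (Option.map τ (f j)).isSome := by rw [← he]; rfl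
                  simpa using hh
                obtain ⟨d, hd⟩ := Option.isSome_iff_exists.mp hjsome
                rw [hd, Option.map_some] at he
                have hdc : d = c := by
                  by_cases h' : d = c
                  · exact h'
                  · by_cases h'' : d = c'
                    · rw [h'', hτc'] at he; exact absurd (Option.some.inj he) hcc'
                    · rw [hτd d h' h''] at he; exact absurd (Option.some.inj he).symm h''
                have e2 := hf (n+2) j (by omega) hj (by rw [hc2]; rfl)
                  (by rw [hc2, hd, hdc])
                rw [hag n (by omega) (by omega) (by omega), hag j hj (by omega) (by omega)]
                omega
          · by_cases hin1 : i = n+1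
            · rw [hin1] at he hs ⊢
              by_cases hjn2 : j = n+2
              · rw [hjn2] at he
                rw [hgn1, hgn2] at he
                exact absurd (Option.some.inj he) hcc'
              · have hjS : n + 2 < j := by omega
                rw [hgn1, hgS j hjS] at he
                have hjsome : (f j).isSome := by
                  have hh : (Option.map τ (f j)).isSome := by rw [← he]; rfl
                  simpa using hh
                obtain ⟨d, hd⟩ := Option.isSome_iff_exists.mp hjsome
                rw [hd, Option.map_some] at he
                have hdc : d = c := by
                  by_cases h' : d = c
                  · exact h'
                  · by_cases h'' : d = c'
                    · rw [h'', hτc'] at he; exact absurd (Option.some.inj he) hcc'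
                    · rw [hτd d h' h''] at he; exact absurd (Option.some.inj he).symm h''
                have e2 := hf (n+2) j (by omega) hj (by rw [hc2]; rfl)
                  (by rw [hc2, hd, hdc])
                rw [hσ1, hag j hj (by omega) (by omega)]
                exact e2
            · by_cases hin2 : i = n+2
              · rw [hin2] at he hs ⊢
                have hjS : n + 2 < j := by omega
                rw [hgn2, hgS j hjS] at he
                have hjsome : (f j).isSome := by
                  have hh : (Option.map τ (f j)).isSome := by rw [← he]; rfl
                  simpa using hh
                obtain ⟨d, hd⟩ := Option.isSome_iff_exists.mp hjsome
                rw [hd, Option.map_some] at he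
                have hdc : d = c' := by
                  by_cases h' : d = c'
                  · exact h'
                  · by_cases h'' : d = c
                    · rw [h'', hτc] at he
                      exact absurd (Option.some.inj he).symm hcc'
                    · rw [hτd d h'' h'] at he; exact absurd (Option.some.inj he).symm h''
                have e2 := hf n j (by omega) hj (by rw [hc']; rfl)
                  (by rw [hc', hd, hdc])
                rw [hσ2, hag j hj (by omega) (by omega)]
                omega
              · have hiS : n + 2 < i := by omega
                have hjS : n + 2 < j := by omega
                rw [hgS i hiS] at hs he
                rw [hgS j hjS] at he
                have hisome : (f i).isSome := by simpa using hs
                have he' : f i = f j := Option.map_injective τ.injective he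
                rw [hag i (by omega) (by omega) (by omega), hag j hj (by omega) (by omega)]
                exact hf i j hij hj hisome he'
      · -- count, colored-y case
        have hstep : cnt L g = cnt L (fun p => f (if p = n then n+1 else if p = n+1 then n+2
            else if p = n+2 then n else p)) := by
          unfold cnt
          congr 1
          apply Finset.filter_congr
          intro x _
          beta_reduce
          by_cases hp : x < n
          · rw [hgP x hp, if_neg (by omega), if_neg (by omega), if_neg (by omega)]
          · rw [hg]; beta_reduce
            rw [if_neg hp]
            simp
        rw [hstep]
        exact cnt_reindex f _
          (fun i => if i = n+1 then n else if i = n+2 then n+1 else if i = n then n+2 else i)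
          (fun i hi => by beta_reduce; split_ifs <;> omega)
          (fun i hi => by beta_reduce; split_ifs <;> omega)
          (fun i hi => by beta_reduce; split_ifs <;> omega)
          (fun i hi => by beta_reduce; split_ifs <;> omega)
    · -- y uncolored
      have hfn0 : f n = none := Option.not_isSome_iff_eq_none.mp hy
      set g : ℕ → Option (Fin k) := fun p => f (if p = n then n+1 else if p = n+1 then n+2
          else if p = n+2 then n else p) with hg
      have hgP : ∀ p, p ≠ n → p ≠ n+1 → p ≠ n+2 → g p = f p := fun p hp hp1 hp2 => by
        rw [hg]; beta_reduce; rw [if_neg hp, if_neg hp1, if_neg hp2]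
      have hgn : g n = f (n+1) := by rw [hg]; beta_reduce; rw [if_pos rfl]
      have hgn1 : g (n+1) = f (n+2) := by
        rw [hg]; beta_reduce; rw [if_neg (by omega), if_pos rfl]
      have hgn2 : g (n+2) = none := by
        rw [hg]; beta_reduce; rw [if_neg (by omega), if_neg (by omega), if_pos rfl, hfn0]
      refine ⟨g, ?_, ?_⟩
      · intro i j hij hj hs he
        show σ i < σ j
        by_cases hjn2 : j = n+2
        · rw [hjn2, hgn2] at he
          rw [he] at hs
          simp at hs
        · by_cases hin2 : i = n+2
          · rw [hin2, hgn2] at hs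
            simp at hs
          · by_cases hin : i = n
            · rw [hin] at hs he ⊢
              rw [hgn] at hs he
              by_cases hjn1 : j = n+1
              · rw [hjn1] at he ⊢
                rw [hag n (by omega) (by omega) (by omega), hσ1]
                omega
              · have hjS : j ≠ n := by omega
                rw [hgP j hjS hjn1 hjn2] at he
                have e2 := hf (n+2) j (by omega) hj (by rw [hc2]; rfl)
                  (by rw [hc2, ← hc1, he])
                rw [hag n (by omega) (by omega) (by omega), hag j hj (by omega) (by omega)]
                omega
            · by_cases hin1 : i = n+1
              · rw [hin1] at hs he ⊢
                rw [hgn1] at hs he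
                have hjS : n + 2 < j := by omega
                rw [hgP j (by omega) (by omega) (by omega)] at he
                have e2 := hf (n+2) j (by omega) hj hs he
                rw [hσ1, hag j hj (by omega) (by omega)]
                exact e2
              · rw [hgP i hin hin1 hin2] at hs he
                by_cases hjn : j = n
                · rw [hjn] at he ⊢
                  rw [hgn] at he
                  have e1 := hf i (n+1) (by omega) (by omega) hs he
                  rw [hag i (by omega) (by omega) (by omega),
                    hag n (by omega) (by omega) (by omega)]
                  omega
                · by_cases hjn1 : j = n+1
                  · rw [hjn1] at he ⊢
                    rw [hgn1] at he
                    have e1 := hf i (n+2) (by omega) (by omega) hs he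
                    rw [hag i (by omega) (by omega) (by omega), hσ1]
                    exact e1
                  · rw [hgP j hjn hjn1 hjn2] at he
                    rw [hag i (by omega) (by omega) (by omega),
                      hag j hj (by omega) (by omega)]
                    exact hf i j hij hj hs he
      · rw [hg]
        exact cnt_reindex f _
          (fun i => if i = n+1 then n else if i = n+2 then n+1 else if i = n then n+2 else i)
          (fun i hi => by beta_reduce; split_ifs <;> omega)
          (fun i hi => by beta_reduce; split_ifs <;> omega)
          (fun i hi => by beta_reduce; split_ifs <;> omega)
          (fun i hi => by beta_reduce; split_ifs <;> omega)
  · -- z, w do not share a color: plain swap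
    apply swap_move k L (n+1) ρ σ hn hσ1 hσ2 (fun i hi hi1 hi2 => hag i hi hi1 hi2) f hf
    intro hs heq
    exact absurd ⟨by rw [heq] at hs; exact hs, by rw [heq]⟩ hc

lemma moveB1 (k L n : ℕ) (ρ σ : ℕ → ℤ) (hn : n + 2 < L)
    (h1 : ρ n < ρ (n+2)) (h2 : ρ (n+2) ≤ ρ (n+1))
    (hσ1 : σ n = ρ (n+1)) (hσ2 : σ (n+1) = ρ n)
    (hag : ∀ i < L, i ≠ n → i ≠ n+1 → σ i = ρ i)
    (f : ℕ → Option (Fin k)) (hf : Valid k ρ L f) :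
    ∃ g : ℕ → Option (Fin k), Valid k σ L g ∧ cnt L g = cnt L f := by
  obtain ⟨f₁, hf₁, hc₁⟩ := rev_move k L ρ f hf
  obtain ⟨g₁, hg₁, hc₂⟩ := moveA1 k L (L-n-3) (fun i => -ρ (L-1-i)) (fun i => -σ (L-1-i))
      (by omega)
      (by show -ρ (L-1-(L-n-3+1)) ≤ -ρ (L-1-(L-n-3))
          rw [show L-1-(L-n-3+1) = n+1 by omega, show L-1-(L-n-3) = n+2 by omega]; omega)
      (by show -ρ (L-1-(L-n-3)) < -ρ (L-1-(L-n-3+2))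
          rw [show L-1-(L-n-3) = n+2 by omega, show L-1-(L-n-3+2) = n by omega]; omega)
      (by show -σ (L-1-(L-n-3+1)) = -ρ (L-1-(L-n-3+2))
          rw [show L-1-(L-n-3+1) = n+1 by omega, show L-1-(L-n-3+2) = n by omega, hσ2])
      (by show -σ (L-1-(L-n-3+2)) = -ρ (L-1-(L-n-3+1))
          rw [show L-1-(L-n-3+2) = n by omega, show L-1-(L-n-3+1) = n+1 by omega, hσ1])
      (by intro i hi hi1 hi2
          show -σ (L-1-i) = -ρ (L-1-i)
          rw [hag (L-1-i) (by omega) (by omega) (by omega)])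
      f₁ hf₁
  obtain ⟨g₂, hg₂, hc₃⟩ := rev_move k L (fun i => -σ (L-1-i)) g₁ hg₁
  refine ⟨g₂, valid_congr ?_ hg₂, by rw [hc₃, hc₂, hc₁]⟩
  intro i hi
  show -(-σ (L-1-(L-1-i))) = σ i
  rw [neg_neg, show L-1-(L-1-i) = i by omega]

lemma SN_eq1 (k : ℕ) (u v : List ℤ) (y z w : ℤ) (hzy : z ≤ y) (hyw : y < w) :
    SN k (fun i => (u ++ [y,z,w] ++ v).getD i 0) (u ++ [y,z,w] ++ v).length
      = SN k (fun i => (u ++ [y,w,z] ++ v).getD i 0) (u ++ [y,w,z] ++ v).length := by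
  have hLr := length_abc u v y z w
  have hLs := length_abc u v y w z
  have hr0 : (u ++ [y,z,w] ++ v).getD u.length 0 = y := by
    rw [getD_abc, if_neg (by omega), if_pos rfl]
  have hr1 : (u ++ [y,z,w] ++ v).getD (u.length+1) 0 = z := by
    rw [getD_abc, if_neg (by omega), if_neg (by omega), if_pos rfl]
  have hr2 : (u ++ [y,z,w] ++ v).getD (u.length+2) 0 = w := by
    rw [getD_abc, if_neg (by omega), if_neg (by omega), if_neg (by omega), if_pos rfl]
  have hs1 : (u ++ [y,w,z] ++ v).getD (u.length+1) 0 = w := by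
    rw [getD_abc, if_neg (by omega), if_neg (by omega), if_pos rfl]
  have hs2 : (u ++ [y,w,z] ++ v).getD (u.length+2) 0 = z := by
    rw [getD_abc, if_neg (by omega), if_neg (by omega), if_neg (by omega), if_pos rfl]
  have hagree : ∀ i, i ≠ u.length+1 → i ≠ u.length+2 →
      (u ++ [y,w,z] ++ v).getD i 0 = (u ++ [y,z,w] ++ v).getD i 0 := by
    intro i h1 h2
    rw [getD_abc, getD_abc]
    split_ifs <;> first | rfl | omega
  rw [hLr, hLs]
  ext N
  constructor
  · rintro ⟨f, hf, rfl⟩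
    obtain ⟨g, hg, hcnt⟩ := moveA1 k (u.length+3+v.length) u.length _ _ (by omega)
      (by show (u ++ [y,z,w] ++ v).getD (u.length+1) 0 ≤ (u ++ [y,z,w] ++ v).getD u.length 0
          rw [hr1, hr0]; exact hzy)
      (by show (u ++ [y,z,w] ++ v).getD u.length 0 < (u ++ [y,z,w] ++ v).getD (u.length+2) 0
          rw [hr0, hr2]; exact hyw)
      (by show (u ++ [y,w,z] ++ v).getD (u.length+1) 0 = (u ++ [y,z,w] ++ v).getD (u.length+2) 0
          rw [hs1, hr2])
      (by show (u ++ [y,w,z] ++ v).getD (u.length+2) 0 = (u ++ [y,z,w] ++ v).getD (u.length+1) 0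
          rw [hs2, hr1])
      (fun i _ h1 h2 => hagree i h1 h2)
      f hf
    exact ⟨g, hg, hcnt.symm⟩
  · rintro ⟨f, hf, rfl⟩
    obtain ⟨g, hg, hcnt⟩ := swap_move k (u.length+3+v.length) (u.length+1) _
      (fun i => (u ++ [y,z,w] ++ v).getD i 0) (by omega)
      (by show (u ++ [y,z,w] ++ v).getD (u.length+1) 0 = (u ++ [y,w,z] ++ v).getD (u.length+2) 0
          rw [hr1, hs2])
      (by show (u ++ [y,z,w] ++ v).getD (u.length+2) 0 = (u ++ [y,w,z] ++ v).getD (u.length+1) 0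
          rw [hr2, hs1])
      (fun i _ h1 h2 => (hagree i h1 h2).symm)
      f hf
      (by intro _ _
          show (u ++ [y,w,z] ++ v).getD (u.length+2) 0 < (u ++ [y,w,z] ++ v).getD (u.length+1) 0
          rw [hs1, hs2]; exact hzy.trans_lt hyw)
    exact ⟨g, hg, hcnt.symm⟩

lemma SN_eq2 (k : ℕ) (u v : List ℤ) (y z w : ℤ) (hzy : z < y) (hyw : y ≤ w) :
    SN k (fun i => (u ++ [z,w,y] ++ v).getD i 0) (u ++ [z,w,y] ++ v).length
      = SN k (fun i => (u ++ [w,z,y] ++ v).getD i 0) (u ++ [w,z,y] ++ v).length := by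
  have hLr := length_abc u v z w y
  have hLs := length_abc u v w z y
  have hr0 : (u ++ [z,w,y] ++ v).getD u.length 0 = z := by
    rw [getD_abc, if_neg (by omega), if_pos rfl]
  have hr1 : (u ++ [z,w,y] ++ v).getD (u.length+1) 0 = w := by
    rw [getD_abc, if_neg (by omega), if_neg (by omega), if_pos rfl]
  have hr2 : (u ++ [z,w,y] ++ v).getD (u.length+2) 0 = y := by
    rw [getD_abc, if_neg (by omega), if_neg (by omega), if_neg (by omega), if_pos rfl]
  have hs0 : (u ++ [w,z,y] ++ v).getD u.length 0 = w := by
    rw [getD_abc, if_neg (by omega), if_pos rfl]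
  have hs1 : (u ++ [w,z,y] ++ v).getD (u.length+1) 0 = z := by
    rw [getD_abc, if_neg (by omega), if_neg (by omega), if_pos rfl]
  have hagree : ∀ i, i ≠ u.length → i ≠ u.length+1 →
      (u ++ [w,z,y] ++ v).getD i 0 = (u ++ [z,w,y] ++ v).getD i 0 := by
    intro i h1 h2
    rw [getD_abc, getD_abc]
    split_ifs <;> first | rfl | omega
  rw [hLr, hLs]
  ext N
  constructor
  · rintro ⟨f, hf, rfl⟩
    obtain ⟨g, hg, hcnt⟩ := moveB1 k (u.length+3+v.length) u.length _ _ (by omega)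
      (by show (u ++ [z,w,y] ++ v).getD u.length 0 < (u ++ [z,w,y] ++ v).getD (u.length+2) 0
          rw [hr0, hr2]; exact hzy)
      (by show (u ++ [z,w,y] ++ v).getD (u.length+2) 0 ≤ (u ++ [z,w,y] ++ v).getD (u.length+1) 0
          rw [hr2, hr1]; exact hyw)
      (by show (u ++ [w,z,y] ++ v).getD u.length 0 = (u ++ [z,w,y] ++ v).getD (u.length+1) 0
          rw [hs0, hr1])
      (by show (u ++ [w,z,y] ++ v).getD (u.length+1) 0 = (u ++ [z,w,y] ++ v).getD u.length 0
          rw [hs1, hr0])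
      (fun i _ h1 h2 => hagree i h1 h2)
      f hf
    exact ⟨g, hg, hcnt.symm⟩
  · rintro ⟨f, hf, rfl⟩
    obtain ⟨g, hg, hcnt⟩ := swap_move k (u.length+3+v.length) u.length _
      (fun i => (u ++ [z,w,y] ++ v).getD i 0) (by omega)
      (by show (u ++ [z,w,y] ++ v).getD u.length 0 = (u ++ [w,z,y] ++ v).getD (u.length+1) 0
          rw [hr0, hs1])
      (by show (u ++ [z,w,y] ++ v).getD (u.length+1) 0 = (u ++ [w,z,y] ++ v).getD u.length 0
          rw [hr1, hs0])
      (fun i _ h1 h2 => (hagree i h1 h2).symm)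
      f hf
      (by intro _ _
          show (u ++ [w,z,y] ++ v).getD (u.length+1) 0 < (u ++ [w,z,y] ++ v).getD u.length 0
          rw [hs0, hs1]; exact hzy.trans_le hyw)
    exact ⟨g, hg, hcnt.symm⟩

end KnuthAux

theorem knuth_relation_invariance (r s : List ℤ)
    (h : KnuthRelated r s ∨ KnuthRelated s r) (k : ℕ) :
    maxIncDecomp k r = maxIncDecomp k s := by
  have key : ∀ a b : List ℤ, KnuthRelated a b → maxIncDecomp k a = maxIncDecomp k b := by
    intro a b hab
    have ha : maxIncDecomp k a = sSup (KnuthAux.SN k (fun i => a.getD i 0) a.length) := by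
      unfold maxIncDecomp
      rw [KnuthAux.maxIncDecomp_eq_aux]
    have hb : maxIncDecomp k b = sSup (KnuthAux.SN k (fun i => b.getD i 0) b.length) := by
      unfold maxIncDecomp
      rw [KnuthAux.maxIncDecomp_eq_aux]
    rw [ha, hb]
    rcases hab with ⟨u,v,y,z,w,h1,h2,rfl,rfl⟩ | ⟨u,v,y,z,w,h1,h2,rfl,rfl⟩
    · rw [KnuthAux.SN_eq1 k u v y z w h1 h2]
    · rw [KnuthAux.SN_eq2 k u v y z w h1 h2]
  rcases h with h | h
  · exact key r s h
  · exact (key s r h).symm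
end

section
/- Let V = {1,...,m}×{1,...,n} with partial order (i,j) ≤ (h,k) iff i ≤ h and j ≥ k, and let Δ_t be the simplicial complex of subsets of V containing no antichain of cardinality t. Then the facets of Δ_t are exactly the families of pairwise disjoint saturated chains (paths) P_1,...,P_{t-1}, where P_i is an unrefinable chain from (i,n) to (m,i). -/
/-!
Antichains for `pordLe` are chains for the relation "strictly south-east", and no two points of
a path are so related; hence a union of `t - 1` paths is a face. It is a facet: the paths
crossing the diagonal of a point `x` outside the union give, together with `x`, an antichain of
size `t`, unless fewer than `t - 1` paths cross that diagonal, and then they already fill it.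

Conversely, let `F` be a facet and `L` the set of its points with no point of `F` strictly
north-west of them. Maximality forces the corners `(0, n - 1)` and `(m - 1, 0)` into `L` and
leaves no gap between consecutive diagonals met by `L`, so `L` is the path `P_0`. Moreover
`F \ L` is a facet of `Δ_{t-1}` on `[1, m) × [1, n)`, and peeling off such layers `t - 1` times
yields the family.
-/

/-- The partial order on the vertex set `{1,…,m} × {1,…,n}`:
`(i,j) ≤ (h,k)` iff `i ≤ h` and `j ≥ k`. -/
def pordLe {m n : ℕ} (p q : Fin m × Fin n) : Prop :=
  p.1 ≤ q.1 ∧ q.2 ≤ p.2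

/-- A face of `Δ_t`: a subset containing no antichain of cardinality `t`. -/
def IsFaceDelta {m n : ℕ} (t : ℕ) (F : Finset (Fin m × Fin n)) : Prop :=
  ¬ ∃ A : Finset (Fin m × Fin n), A ⊆ F ∧ A.card = t ∧
      ∀ x ∈ A, ∀ y ∈ A, x ≠ y → ¬ pordLe x y ∧ ¬ pordLe y x

/-- A facet of `Δ_t`: a face maximal under inclusion. -/
def IsFacetDelta {m n : ℕ} (t : ℕ) (F : Finset (Fin m × Fin n)) : Prop :=
  IsFaceDelta t F ∧ ∀ G : Finset (Fin m × Fin n), IsFaceDelta t G → F ⊆ G → G = F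

/-- `P` is a path (saturated/unrefinable chain) from `A` to `B`: a sequence of points
starting at `A`, ending at `B`, each step moving by `(1,0)` or `(0,-1)`. -/
def IsPath {m n : ℕ} (P : Finset (Fin m × Fin n)) (A B : Fin m × Fin n) : Prop :=
  ∃ (d : ℕ) (p : Fin (d + 1) → Fin m × Fin n), p 0 = A ∧ p (Fin.last d) = B ∧
    (∀ i : Fin d,
      (((p i.succ).1 : ℕ) = ((p i.castSucc).1 : ℕ) + 1 ∧ (p i.succ).2 = (p i.castSucc).2) ∨
      ((p i.succ).1 = (p i.castSucc).1 ∧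
        ((p i.castSucc).2 : ℕ) = ((p i.succ).2 : ℕ) + 1)) ∧
    P = Finset.image p Finset.univ

section

open Finset

theorem Finset.Icc_subset_of_forall_exists_between {D : Finset ℕ} {a b : ℕ} (ha : a ∈ D)
    (hb : b ∈ D) (h : ∀ x ∈ D, ∀ y ∈ D, x + 2 ≤ y → ∃ z ∈ D, x < z ∧ z < y) :
    Icc a b ⊆ D := by
  intro s hs
  rw [mem_Icc] at hs
  by_contra hsD
  have hlo : (D.filter (· < s)).Nonempty :=
    ⟨a, mem_filter.2 ⟨ha, lt_of_le_of_ne hs.1 (ne_of_mem_of_not_mem ha hsD)⟩⟩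
  have hhi : (D.filter (s < ·)).Nonempty :=
    ⟨b, mem_filter.2 ⟨hb, lt_of_le_of_ne hs.2 (ne_of_mem_of_not_mem hb hsD).symm⟩⟩
  have hx := mem_filter.1 (max'_mem _ hlo)
  have hy := mem_filter.1 (min'_mem _ hhi)
  obtain ⟨z, hzD, hxz, hzy⟩ := h _ hx.1 _ hy.1 (by omega)
  rcases lt_trichotomy z s with hzs | rfl | hsz
  · exact (le_max' _ z (mem_filter.2 ⟨hzD, hzs⟩)).not_gt hxz
  · exact hsD hzD
  · exact (min'_le _ z (mem_filter.2 ⟨hzD, hsz⟩)).not_gt hzy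

theorem card_le_card_of_subset_biUnion {ι α : Type*} [DecidableEq α] {r : α → α → Prop}
    {A : Finset α} {s : Finset ι} {P : ι → Finset α} (hA : IsChain r (A : Set α))
    (hP : ∀ i ∈ s, IsAntichain r (P i : Set α)) (hAP : A ⊆ s.biUnion P) :
    A.card ≤ s.card :=
  calc A.card ≤ (s.biUnion fun i => A ∩ P i).card := card_le_card fun a ha => by
        obtain ⟨i, hi, hai⟩ := mem_biUnion.1 (hAP ha)
        exact mem_biUnion.2 ⟨i, hi, mem_inter.2 ⟨ha, hai⟩⟩
    _ ≤ ∑ i ∈ s, (A ∩ P i).card := card_biUnion_le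
    _ ≤ ∑ _i ∈ s, 1 := sum_le_sum fun i hi => card_le_one.2 fun a ha b hb => by
        by_contra hab
        obtain ⟨haA, haP⟩ := mem_inter.1 ha
        obtain ⟨hbA, hbP⟩ := mem_inter.1 hb
        rcases hA haA hbA hab with h | h
        exacts [hab ((hP i hi).eq haP hbP h), hab ((hP i hi).eq hbP haP h).symm]
    _ = s.card := by simp

variable {m n : ℕ}

/-- Distinct points are `pordLe`-incomparable iff one is strictly south-east of the other, so
the antichains of the paper are the chains of `StrictSE`. -/
def StrictSE (x y : Fin m × Fin n) : Prop :=
  x.1 < y.1 ∧ x.2 < y.2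

instance : DecidableRel (StrictSE (m := m) (n := n)) :=
  fun _ _ => inferInstanceAs (Decidable (_ ∧ _))

/-- Distinct points with equal `diagIndex` are `pordLe`-incomparable; a path step raises it by
one. -/
def diagIndex (v : Fin m × Fin n) : ℕ :=
  v.1 + (n - 1 - v.2)

def diagonal (m n s : ℕ) : Finset (Fin m × Fin n) :=
  univ.filter fun v => diagIndex v = s

def quadrant (m n u : ℕ) : Finset (Fin m × Fin n) :=
  univ.filter fun v => u ≤ (v.1 : ℕ) ∧ u ≤ (v.2 : ℕ)

structure IsFacetIn (R : Finset (Fin m × Fin n)) (k : ℕ) (F : Finset (Fin m × Fin n)) :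
    Prop where
  subset : F ⊆ R
  isFace : IsFaceDelta k F
  eq_of_subset : ∀ G ⊆ R, IsFaceDelta k G → F ⊆ G → G = F

def minLayer (F : Finset (Fin m × Fin n)) : Finset (Fin m × Fin n) :=
  F.filter fun v => ∀ y ∈ F, ¬ StrictSE y v

def peel (F : Finset (Fin m × Fin n)) : ℕ → Finset (Fin m × Fin n)
  | 0 => F
  | j + 1 => peel F j \ minLayer (peel F j)

section Basic

variable {x y z : Fin m × Fin n}

theorem StrictSE.trans (hxy : StrictSE x y) (hyz : StrictSE y z) : StrictSE x z :=
  ⟨hxy.1.trans hyz.1, hxy.2.trans hyz.2⟩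

theorem StrictSE.irrefl (x : Fin m × Fin n) : ¬ StrictSE x x :=
  fun h => lt_irrefl _ h.1

theorem not_pordLe_and_not_pordLe_iff :
    ¬ pordLe x y ∧ ¬ pordLe y x ↔ StrictSE x y ∨ StrictSE y x := by
  unfold pordLe StrictSE
  constructor <;> intro h <;> omega

theorem strictSE_or_strictSE_of_diagIndex_eq (h : diagIndex x = diagIndex y) (hne : x ≠ y) :
    StrictSE x y ∨ StrictSE y x := by
  have : (x.1 : ℕ) ≠ y.1 ∨ (x.2 : ℕ) ≠ y.2 := by
    by_contra! hc
    exact hne (Prod.ext (Fin.ext hc.1) (Fin.ext hc.2))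
  unfold diagIndex at h
  unfold StrictSE
  omega

@[simp]
theorem mem_diagonal {s : ℕ} : x ∈ diagonal m n s ↔ diagIndex x = s := by
  simp [diagonal]

theorem isChain_of_subset_diagonal {S : Finset (Fin m × Fin n)} {s : ℕ}
    (hS : S ⊆ diagonal m n s) : IsChain StrictSE (S : Set (Fin m × Fin n)) :=
  fun _ hx _ hy hne => strictSE_or_strictSE_of_diagIndex_eq
    ((mem_diagonal.1 (hS hx)).trans (mem_diagonal.1 (hS hy)).symm) hne

theorem card_diagonal_le (s : ℕ) : (diagonal m n s).card ≤ min s (m + n - 2 - s) + 1 := by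
  have := card_le_card_of_injOn (s := diagonal m n s) (t := Icc (s - (n - 1)) (min s (m - 1)))
    (fun v : Fin m × Fin n => (v.1 : ℕ))
    (fun v hv => by
      simp only [mem_coe, mem_diagonal, diagIndex, coe_Icc, Set.mem_Icc] at hv ⊢
      omega)
    (fun v hv w hw hvw => by
      simp only [mem_coe, mem_diagonal, diagIndex] at hv hw hvw
      exact Prod.ext (Fin.ext hvw) (Fin.ext (by omega)))
  simp only [Nat.card_Icc] at this
  omega

theorem isAntichain_iff_isChain {A : Finset (Fin m × Fin n)} :
    (∀ x ∈ A, ∀ y ∈ A, x ≠ y → ¬ pordLe x y ∧ ¬ pordLe y x) ↔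
      IsChain StrictSE (A : Set (Fin m × Fin n)) := by
  simp only [IsChain, Set.Pairwise, mem_coe, not_pordLe_and_not_pordLe_iff]

theorem isFaceDelta_iff {k : ℕ} {F : Finset (Fin m × Fin n)} :
    IsFaceDelta k F ↔
      ∀ C ⊆ F, IsChain StrictSE (C : Set (Fin m × Fin n)) → C.card < k := by
  simp only [IsFaceDelta, isAntichain_iff_isChain, not_exists, not_and]
  constructor
  · intro h C hCF hC
    by_contra! hk
    obtain ⟨A, hAC, hA⟩ := exists_subset_card_eq hk
    exact h A (hAC.trans hCF) hA (hC.mono hAC)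
  · intro h A hAF hA hchain
    exact (h A hAF hchain).ne hA

theorem exists_least_of_isChain {C : Finset (Fin m × Fin n)}
    (hC : IsChain StrictSE (C : Set (Fin m × Fin n))) (hne : C.Nonempty) :
    ∃ z ∈ C, ∀ c ∈ C, c ≠ z → StrictSE z c := by
  obtain ⟨z, hz, hmin⟩ := C.exists_min_image (fun v => v.1) hne
  refine ⟨z, hz, fun c hc hcz => (hC hz hc hcz.symm).resolve_right fun h => ?_⟩
  exact (hmin c hc).not_gt h.1

theorem isChain_insert_of_forall {C : Finset (Fin m × Fin n)}
    (hC : IsChain StrictSE (C : Set (Fin m × Fin n))) (hx : ∀ c ∈ C, StrictSE x c) :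
    IsChain StrictSE (↑(insert x C) : Set (Fin m × Fin n)) := by
  rw [coe_insert]
  exact hC.insert fun c hc _ => Or.inl (hx c hc)

end Basic

section Paths

variable {P : Finset (Fin m × Fin n)} {A B : Fin m × Fin n}

theorem step_of_diagIndex_eq_add_one {x y : Fin m × Fin n} (hxy : ¬ StrictSE x y)
    (hyx : ¬ StrictSE y x) (h : diagIndex y = diagIndex x + 1) :
    ((y.1 : ℕ) = (x.1 : ℕ) + 1 ∧ y.2 = x.2) ∨
      (y.1 = x.1 ∧ (x.2 : ℕ) = (y.2 : ℕ) + 1) := by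
  unfold StrictSE at hxy hyx
  unfold diagIndex at h
  omega

theorem isPath_of_diagIndex {S : Finset (Fin m × Fin n)}
    (hS : IsAntichain StrictSE (S : Set (Fin m × Fin n))) (hA : A ∈ S) (hB : B ∈ S)
    (hdiag : ∀ x ∈ S, diagIndex A ≤ diagIndex x ∧ diagIndex x ≤ diagIndex B)
    (hsurj : ∀ s ∈ Icc (diagIndex A) (diagIndex B), ∃ x ∈ S, diagIndex x = s) :
    IsPath S A B := by
  have huniq : ∀ x ∈ S, ∀ y ∈ S, diagIndex x = diagIndex y → x = y := by
    intro x hx y hy h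
    by_contra hne
    rcases strictSE_or_strictSE_of_diagIndex_eq h hne with hxy | hyx
    exacts [hne (hS.eq hx hy hxy), hne (hS.eq hy hx hyx).symm]
  have hAB := hdiag A hA
  have : ∀ k : Fin (diagIndex B - diagIndex A + 1), ∃ x ∈ S, diagIndex x = diagIndex A + k :=
    fun k => hsurj _ (mem_Icc.2 ⟨by omega, by omega⟩)
  choose p hpS hpdiag using this
  refine ⟨_, p, huniq _ (hpS 0) _ hA (by simp [hpdiag]),
    huniq _ (hpS _) _ hB (by simp [hpdiag]; omega), fun i => ?_, ?_⟩
  · have h1 : diagIndex (p i.castSucc) = diagIndex A + i := by simpa using hpdiag i.castSucc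
    have h2 : diagIndex (p i.succ) = diagIndex A + i + 1 := by simp [hpdiag]; omega
    have hne : p i.castSucc ≠ p i.succ := fun h => by rw [h] at h1; omega
    exact step_of_diagIndex_eq_add_one (hS (hpS _) (hpS _) hne) (hS (hpS _) (hpS _) hne.symm)
      (by omega)
  · ext x
    refine ⟨fun hx => ?_, fun hx => ?_⟩
    · have := hdiag x hx
      exact mem_image.2 ⟨⟨diagIndex x - diagIndex A, by omega⟩, mem_univ _,
        huniq _ (hpS _) _ hx (by simp [hpdiag]; omega)⟩
    · obtain ⟨k, -, rfl⟩ := mem_image.1 hx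
      exact hpS k

theorem IsPath.isAntichain (h : IsPath P A B) :
    IsAntichain StrictSE (P : Set (Fin m × Fin n)) := by
  obtain ⟨d, p, -, -, hstep, rfl⟩ := h
  have hmono : Monotone fun k => (p k).1 :=
    Fin.monotone_iff_le_succ.2 fun k => by have := hstep k; omega
  have hanti : Antitone fun k => (p k).2 :=
    Fin.antitone_iff_succ_le.2 fun k => by have := hstep k; omega
  intro x hx y hy _ hxy
  obtain ⟨k, -, rfl⟩ := mem_image.1 hx
  obtain ⟨l, -, rfl⟩ := mem_image.1 hy
  rcases le_total k l with hkl | hkl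
  exacts [(hanti hkl).not_gt hxy.2, (hmono hkl).not_gt hxy.1]

theorem IsPath.exists_mem_diagIndex (h : IsPath P A B) {s : ℕ} (hAs : diagIndex A ≤ s)
    (hsB : s ≤ diagIndex B) : ∃ x ∈ P, diagIndex x = s := by
  obtain ⟨d, p, rfl, rfl, hstep, rfl⟩ := h
  have hdiag : ∀ k : Fin (d + 1), diagIndex (p k) = diagIndex (p 0) + k := by
    intro k
    induction k using Fin.induction with
    | zero => simp
    | succ k ih =>
      have := hstep k
      simp only [diagIndex, Fin.val_succ, Fin.val_castSucc] at ih ⊢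
      omega
  have hlast := hdiag (Fin.last d)
  simp only [Fin.val_last] at hlast
  exact ⟨p ⟨s - diagIndex (p 0), by omega⟩, mem_image_of_mem _ (mem_univ _),
    by rw [hdiag, Fin.val_mk]; omega⟩

end Paths

section Layers

variable {k u : ℕ} {R F : Finset (Fin m × Fin n)} {C : Finset (Fin m × Fin n)}
  {x y z v w : Fin m × Fin n}

theorem mem_quadrant : x ∈ quadrant m n u ↔ u ≤ (x.1 : ℕ) ∧ u ≤ (x.2 : ℕ) := by
  simp [quadrant]

theorem mem_minLayer : v ∈ minLayer F ↔ v ∈ F ∧ ∀ y ∈ F, ¬ StrictSE y v :=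
  mem_filter

theorem minLayer_subset : minLayer F ⊆ F :=
  filter_subset _ _

theorem isAntichain_minLayer : IsAntichain StrictSE (minLayer F : Set (Fin m × Fin n)) :=
  fun _ hx _ hy _ h => (mem_minLayer.1 hy).2 _ (mem_minLayer.1 hx).1 h

theorem forall_strictSE_of_isLeast (hleast : ∀ c ∈ C, c ≠ z → StrictSE z c)
    (hyz : StrictSE y z) : ∀ c ∈ C, StrictSE y c := by
  intro c hc
  rcases eq_or_ne c z with rfl | hcz
  · exact hyz
  · exact hyz.trans (hleast c hc hcz)

theorem IsFaceDelta.card_add_one_lt (hF : IsFaceDelta k F) (hx : x ∈ F) (hCF : C ⊆ F)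
    (hC : IsChain StrictSE (C : Set (Fin m × Fin n))) (hxC : ∀ c ∈ C, StrictSE x c) :
    C.card + 1 < k := by
  have hxC' : x ∉ C := fun h => StrictSE.irrefl x (hxC x h)
  simpa [card_insert_of_notMem hxC'] using
    isFaceDelta_iff.1 hF _ (insert_subset hx hCF) (isChain_insert_of_forall hC hxC)

theorem IsFaceDelta.mem_minLayer_of_isLeast (hF : IsFaceDelta k F) (hCF : C ⊆ F)
    (hC : IsChain StrictSE (C : Set (Fin m × Fin n))) (hk : k ≤ C.card + 1) (hz : z ∈ C)
    (hleast : ∀ c ∈ C, c ≠ z → StrictSE z c) : z ∈ minLayer F := by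
  refine mem_minLayer.2 ⟨hCF hz, fun y hy hyz => ?_⟩
  have := hF.card_add_one_lt hy hCF hC (forall_strictSE_of_isLeast hleast hyz)
  omega

theorem IsFacetIn.exists_chain_above (hF : IsFacetIn R k F) (hxR : x ∈ R) (hxF : x ∉ F)
    (hbelow : ∀ y ∈ F, ¬ StrictSE y x) :
    ∃ C ⊆ F, IsChain StrictSE (C : Set (Fin m × Fin n)) ∧ (∀ c ∈ C, StrictSE x c) ∧
      k ≤ C.card + 1 := by
  have hnot : ¬ IsFaceDelta k (insert x F) := fun h => hxF <| by
    rw [← hF.eq_of_subset _ (insert_subset hxR hF.subset) h (subset_insert x F)]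
    exact mem_insert_self x F
  simp only [isFaceDelta_iff, not_forall, not_lt] at hnot
  obtain ⟨C, hCsub, hC, hk⟩ := hnot
  have hxC : x ∈ C := by
    by_contra h
    refine (isFaceDelta_iff.1 hF.isFace C (fun c hc => ?_) hC).not_ge hk
    exact (mem_insert.1 (hCsub hc)).resolve_left (ne_of_mem_of_not_mem hc h)
  have hCF : C.erase x ⊆ F := fun c hc =>
    (mem_insert.1 (hCsub (mem_of_mem_erase hc))).resolve_left (ne_of_mem_erase hc)
  refine ⟨C.erase x, hCF, hC.mono (coe_subset.2 (erase_subset x C)), fun c hc => ?_,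
    by rwa [card_erase_add_one hxC]⟩
  exact (hC hxC (mem_of_mem_erase hc) (ne_of_mem_erase hc).symm).resolve_right
    (hbelow c (hCF hc))

theorem IsFacetIn.mem_minLayer_of_isolated (hF : IsFacetIn R k F) (hk : 2 ≤ k) (hxR : x ∈ R)
    (hiso : ∀ y ∈ R, ¬ StrictSE y x ∧ ¬ StrictSE x y) : x ∈ minLayer F := by
  have hbelow : ∀ y ∈ F, ¬ StrictSE y x := fun y hy => (hiso y (hF.subset hy)).1
  refine mem_minLayer.2 ⟨?_, hbelow⟩
  by_contra hxF
  obtain ⟨C, hCF, -, hxC, hkC⟩ := hF.exists_chain_above hxR hxF hbelow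
  obtain ⟨c, hc⟩ := card_pos.1 (by omega : 0 < C.card)
  exact (hiso c (hF.subset (hCF hc))).2 (hxC c hc)

theorem IsFacetIn.mem_minLayer_of_forall_strictSE (hF : IsFacetIn R k F) (hxR : x ∈ R)
    (hbelow : ∀ y ∈ F, ¬ StrictSE y x) (hv : v ∈ F)
    (habove : ∀ y, StrictSE x y → StrictSE v y) : x ∈ minLayer F := by
  refine mem_minLayer.2 ⟨?_, hbelow⟩
  by_contra hxF
  obtain ⟨C, hCF, hC, hxC, hkC⟩ := hF.exists_chain_above hxR hxF hbelow
  have := hF.isFace.card_add_one_lt hv hCF hC fun c hc => habove c (hxC c hc)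
  omega

theorem IsFacetIn.exists_mem_minLayer_between (hF : IsFacetIn (quadrant m n u) k F)
    (hk : 2 ≤ k) (hv : v ∈ minLayer F) (hw : w ∈ minLayer F)
    (hvw : diagIndex v + 2 ≤ diagIndex w) :
    ∃ x ∈ minLayer F, diagIndex v < diagIndex x ∧ diagIndex x < diagIndex w := by
  obtain ⟨hvF, hv⟩ := mem_minLayer.1 hv
  obtain ⟨hwF, hw⟩ := mem_minLayer.1 hw
  have hvR := mem_quadrant.1 (hF.subset hvF)
  have hwR := mem_quadrant.1 (hF.subset hwF)
  have hwv := hv w hwF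
  have hvw' := hw v hvF
  unfold StrictSE at hwv hvw'
  unfold diagIndex at hvw ⊢
  rcases Nat.lt_or_ge (w.2 : ℕ) v.2 with hlt | hge
  · -- the neighbour `x` of `v` one column to the left: if it is not in `F`, the bottom `z` of
    -- its chain is a point of `minLayer F` in the same column as `v`
    obtain ⟨x, hx1, hx2⟩ : ∃ x : Fin m × Fin n, x.1 = v.1 ∧ (x.2 : ℕ) = v.2 - 1 :=
      ⟨(v.1, ⟨v.2 - 1, by omega⟩), rfl, rfl⟩
    have hbelow : ∀ y ∈ F, ¬ StrictSE y x := fun y hy h =>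
      hv y hy (by unfold StrictSE at h ⊢; omega)
    by_cases hxF : x ∈ F
    · exact ⟨x, mem_minLayer.2 ⟨hxF, hbelow⟩, by omega⟩
    obtain ⟨C, hCF, hC, hxC, hkC⟩ :=
      hF.exists_chain_above (mem_quadrant.2 (by omega)) hxF hbelow
    obtain ⟨z, hzC, hz⟩ := exists_least_of_isChain hC (card_pos.1 (by omega))
    have hzB := hF.isFace.mem_minLayer_of_isLeast hCF hC hkC hzC hz
    have hvz : ¬ StrictSE v z := fun h => by
      have := hF.isFace.card_add_one_lt hvF hCF hC (forall_strictSE_of_isLeast hz h)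
      omega
    have hxz := hxC z hzC
    have hwz := (mem_minLayer.1 hzB).2 w hwF
    unfold StrictSE at hvz hxz hwz
    exact ⟨z, hzB, by omega⟩
  · -- the point `x` just south of `v`: what lies strictly north-west of `x` does so of `w`,
    -- what lies strictly south-east of `x` does so of `v`
    obtain ⟨x, hx1, hx2⟩ : ∃ x : Fin m × Fin n, (x.1 : ℕ) = v.1 + 1 ∧ x.2 = v.2 :=
      ⟨(⟨v.1 + 1, by omega⟩, v.2), rfl, rfl⟩
    refine ⟨x, hF.mem_minLayer_of_forall_strictSE (mem_quadrant.2 (by omega))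
      (fun y hy h => hw y hy ?_) hvF fun y h => ?_, by omega⟩ <;>
    · unfold StrictSE at h ⊢
      omega

theorem IsFacetIn.isPath_minLayer (hF : IsFacetIn (quadrant m n u) k F) (hk : 2 ≤ k)
    (hum : u < m) (hun : u < n) :
    IsPath (minLayer F) (⟨u, hum⟩, ⟨n - 1, by omega⟩)
      (⟨m - 1, by omega⟩, ⟨u, hun⟩) := by
  have hA : ((⟨u, hum⟩, ⟨n - 1, by omega⟩) : Fin m × Fin n) ∈ minLayer F :=
    hF.mem_minLayer_of_isolated hk (mem_quadrant.2 ⟨le_rfl, by simp; omega⟩) fun y hy => by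
      rw [mem_quadrant] at hy
      simp only [StrictSE, Fin.lt_def]
      omega
  have hB : ((⟨m - 1, by omega⟩, ⟨u, hun⟩) : Fin m × Fin n) ∈ minLayer F :=
    hF.mem_minLayer_of_isolated hk (mem_quadrant.2 ⟨by simp; omega, le_rfl⟩) fun y hy => by
      rw [mem_quadrant] at hy
      simp only [StrictSE, Fin.lt_def]
      omega
  have hgap := Finset.Icc_subset_of_forall_exists_between (mem_image_of_mem diagIndex hA)
    (mem_image_of_mem diagIndex hB) fun a ha b hb hab => by
      obtain ⟨v, hv, rfl⟩ := mem_image.1 ha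
      obtain ⟨w, hw, rfl⟩ := mem_image.1 hb
      obtain ⟨x, hx, hvx, hxw⟩ := hF.exists_mem_minLayer_between hk hv hw hab
      exact ⟨_, mem_image_of_mem _ hx, hvx, hxw⟩
  refine isPath_of_diagIndex isAntichain_minLayer hA hB (fun x hx => ?_) fun s hs => ?_
  · have := mem_quadrant.1 (hF.subset (minLayer_subset hx))
    simp only [diagIndex]
    omega
  · simpa using hgap hs

end Layers

section Peel

variable {k u : ℕ} {F G B : Finset (Fin m × Fin n)} {x : Fin m × Fin n}

theorem isFaceDelta_union_of_isAntichain (hG : IsFaceDelta k G)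
    (hB : IsAntichain StrictSE (B : Set (Fin m × Fin n))) : IsFaceDelta (k + 1) (G ∪ B) := by
  rw [isFaceDelta_iff] at hG ⊢
  intro C hC hchain
  have hCG : C \ B ⊆ G := fun c hc =>
    (mem_union.1 (hC (mem_sdiff.1 hc).1)).resolve_right (mem_sdiff.1 hc).2
  have h1 := hG _ hCG (hchain.mono (coe_subset.2 sdiff_subset))
  have h2 : (C ∩ B).card ≤ 1 := card_le_one.2 fun a ha b hb => by
    by_contra hab
    obtain ⟨haC, haB⟩ := mem_inter.1 ha
    obtain ⟨hbC, hbB⟩ := mem_inter.1 hb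
    rcases hchain haC hbC hab with h | h
    exacts [hab (hB.eq haB hbB h), hab (hB.eq hbB haB h).symm]
  have := card_sdiff_add_card_inter C B
  omega

theorem IsFacetIn.exists_chain_above_of_mem_minLayer (hF : IsFacetIn (quadrant m n u) k F)
    (hk : 2 ≤ k) (hx : x ∈ minLayer F) (hxR : x ∈ quadrant m n (u + 1)) :
    ∃ C ⊆ F \ minLayer F, IsChain StrictSE (C : Set (Fin m × Fin n)) ∧
      (∀ c ∈ C, StrictSE x c) ∧ k ≤ C.card + 2 := by
  obtain ⟨hxF, hxmin⟩ := mem_minLayer.1 hx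
  rw [mem_quadrant] at hxR
  obtain ⟨x', hx1, hx2⟩ :
      ∃ x' : Fin m × Fin n, (x'.1 : ℕ) = x.1 - 1 ∧ (x'.2 : ℕ) = x.2 - 1 :=
    ⟨(⟨x.1 - 1, by omega⟩, ⟨x.2 - 1, by omega⟩), rfl, rfl⟩
  have hbelow : ∀ y ∈ F, ¬ StrictSE y x' := fun y hy h =>
    hxmin y hy (by unfold StrictSE at h ⊢; omega)
  have hx'F : x' ∉ F := fun h => hxmin x' h (by unfold StrictSE; omega)
  obtain ⟨C, hCF, hC, hx'C, hkC⟩ :=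
    hF.exists_chain_above (mem_quadrant.2 (by omega)) hx'F hbelow
  -- the bottom `z` of the chain lies weakly south-east of `x`, so the rest lies strictly so
  obtain ⟨z, hzC, hz⟩ := exists_least_of_isChain hC (card_pos.1 (by omega))
  have hx'z := hx'C z hzC
  have habove : ∀ c ∈ C.erase z, StrictSE x c := fun c hc => by
    have := hz c (mem_of_mem_erase hc) (ne_of_mem_erase hc)
    unfold StrictSE at hx'z this ⊢
    omega
  refine ⟨C.erase z, fun c hc => mem_sdiff.2 ⟨hCF (mem_of_mem_erase hc), fun hcB =>
    (mem_minLayer.1 hcB).2 x hxF (habove c hc)⟩, hC.mono (coe_subset.2 (erase_subset z C)),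
    habove, ?_⟩
  have := card_erase_add_one hzC
  omega

theorem IsFacetIn.sdiff_minLayer (hF : IsFacetIn (quadrant m n u) k F) (hk : 2 ≤ k) :
    IsFacetIn (quadrant m n (u + 1)) (k - 1) (F \ minLayer F) where
  subset x hx := by
    obtain ⟨hxF, hxB⟩ := mem_sdiff.1 hx
    obtain ⟨y, hyF, hyx⟩ : ∃ y ∈ F, StrictSE y x := by simpa [mem_minLayer, hxF] using hxB
    have := mem_quadrant.1 (hF.subset hyF)
    unfold StrictSE at hyx
    exact mem_quadrant.2 (by omega)
  isFace := isFaceDelta_iff.2 fun C hC hchain => by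
    by_contra! hkC
    obtain ⟨z, hzC, hz⟩ := exists_least_of_isChain hchain (card_pos.1 (by omega))
    exact (mem_sdiff.1 (hC hzC)).2 <|
      hF.isFace.mem_minLayer_of_isLeast (hC.trans sdiff_subset) hchain (by omega) hzC hz
  eq_of_subset G hGR hG hFG := by
    have hGF : G ∪ minLayer F = F := by
      refine hF.eq_of_subset _ (union_subset (fun x hx => ?_) (minLayer_subset.trans hF.subset))
        ?_ fun x hx => ?_
      · have := mem_quadrant.1 (hGR hx)
        exact mem_quadrant.2 (by omega)
      · simpa [Nat.sub_add_cancel (by omega : 1 ≤ k)] using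
          isFaceDelta_union_of_isAntichain hG isAntichain_minLayer
      · by_cases hxB : x ∈ minLayer F
        exacts [mem_union_right _ hxB, mem_union_left _ (hFG (mem_sdiff.2 ⟨hx, hxB⟩))]
    refine Subset.antisymm (fun x hxG => ?_) hFG
    refine mem_sdiff.2 ⟨hGF ▸ mem_union_left _ hxG, fun hxB => ?_⟩
    obtain ⟨C, hCsub, hC, hxC, hkC⟩ := hF.exists_chain_above_of_mem_minLayer hk hxB (hGR hxG)
    have := hG.card_add_one_lt hxG (hCsub.trans hFG) hC hxC
    omega

theorem peel_succ_subset (F : Finset (Fin m × Fin n)) (j : ℕ) : peel F (j + 1) ⊆ peel F j :=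
  sdiff_subset

theorem disjoint_minLayer_peel {i j : ℕ} (hij : i < j) :
    Disjoint (minLayer (peel F i)) (minLayer (peel F j)) :=
  disjoint_sdiff.mono_right <| minLayer_subset.trans <|
    antitone_nat_of_succ_le (peel_succ_subset F) (Nat.succ_le_of_lt hij)

theorem biUnion_range_minLayer_peel_union (F : Finset (Fin m × Fin n)) (N : ℕ) :
    (range N).biUnion (fun j => minLayer (peel F j)) ∪ peel F N = F := by
  induction N with
  | zero => simp [peel]
  | succ N ih =>
    rw [range_add_one, biUnion_insert, union_comm (minLayer _), union_assoc, peel,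
      union_sdiff_of_subset minLayer_subset, ih]

theorem IsFacetDelta.isFacetIn_peel {t : ℕ} (hF : IsFacetDelta t F) :
    ∀ j, j + 1 ≤ t → IsFacetIn (quadrant m n j) (t - j) (peel F j)
  | 0, _ =>
    ⟨fun _ _ => mem_quadrant.2 ⟨Nat.zero_le _, Nat.zero_le _⟩, hF.1, fun G _ => hF.2 G⟩
  | j + 1, hj => by
    simpa [Nat.sub_sub, peel] using (hF.isFacetIn_peel j (by omega)).sdiff_minLayer (by omega)

theorem eq_empty_of_isFaceDelta_one (hF : IsFaceDelta 1 F) : F = ∅ :=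
  eq_empty_of_forall_notMem fun x hx => by
    simpa using isFaceDelta_iff.1 hF {x} (singleton_subset_iff.2 hx) (by simp [IsChain])

end Peel

section Family

variable {t : ℕ} {P : Fin (t - 1) → Finset (Fin m × Fin n)}
  {A B : Fin (t - 1) → Fin m × Fin n}

theorem le_card_biUnion_inter_diagonal (hP : ∀ i, IsPath (P i) (A i) (B i))
    (hA : ∀ i, diagIndex (A i) = i) (hB : ∀ i, diagIndex (B i) = m + n - 2 - i)
    (hdisj : ∀ i j, i ≠ j → Disjoint (P i) (P j)) {s : ℕ} (hs : s ≤ m + n - 2) :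
    min (t - 1) (min s (m + n - 2 - s) + 1) ≤ (univ.biUnion P ∩ diagonal m n s).card := by
  obtain ⟨N, hN⟩ : ∃ N, N = min (t - 1) (min s (m + n - 2 - s) + 1) := ⟨_, rfl⟩
  have hcross : ∀ j : Fin N, ∃ q ∈ P (Fin.castLE (by omega) j), diagIndex q = s :=
    fun j => (hP _).exists_mem_diagIndex (by rw [hA]; simp; omega) (by rw [hB]; simp; omega)
  choose q hqP hqs using hcross
  have := card_le_card_of_injOn (s := univ) (t := univ.biUnion P ∩ diagonal m n s) q
    (fun j _ => mem_inter.2 ⟨mem_biUnion.2 ⟨_, mem_univ _, hqP j⟩, mem_diagonal.2 (hqs j)⟩)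
    fun j _ j' _ h => by
      by_contra hne
      exact disjoint_left.1 (hdisj _ _ fun h' => hne (Fin.castLE_injective _ h')) (hqP j)
        (h ▸ hqP j')
  simpa [← hN] using this

theorem isFacetDelta_biUnion_of_isPath (ht : 1 ≤ t) (hP : ∀ i, IsPath (P i) (A i) (B i))
    (hA : ∀ i, diagIndex (A i) = i) (hB : ∀ i, diagIndex (B i) = m + n - 2 - i)
    (hdisj : ∀ i j, i ≠ j → Disjoint (P i) (P j)) : IsFacetDelta t (univ.biUnion P) := by
  refine ⟨isFaceDelta_iff.2 fun C hC hchain => ?_, fun G hG hPG => ?_⟩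
  · have := card_le_card_of_subset_biUnion hchain (fun i _ => (hP i).isAntichain) hC
    simp only [card_univ, Fintype.card_fin] at this
    omega
  refine Subset.antisymm (fun x hxG => ?_) hPG
  by_contra hxP
  -- the paths crossing the diagonal of `x` form, together with `x`, an antichain of size `t`,
  -- unless fewer than `t - 1` of them cross it, and then they fill it
  obtain ⟨s, hxs⟩ : ∃ s, diagIndex x = s := ⟨_, rfl⟩
  have hQ := le_card_biUnion_inter_diagonal hP hA hB hdisj (s := s)
    (by unfold diagIndex at hxs; omega)
  have hxQ : x ∉ univ.biUnion P ∩ diagonal m n s := fun h => hxP (mem_inter.1 h).1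
  have hK : insert x (univ.biUnion P ∩ diagonal m n s) ⊆ diagonal m n s :=
    insert_subset (mem_diagonal.2 hxs) inter_subset_right
  have h1 := isFaceDelta_iff.1 hG _ (insert_subset hxG (inter_subset_left.trans hPG))
    (isChain_of_subset_diagonal hK)
  have h2 := (card_le_card hK).trans (card_diagonal_le s)
  rw [card_insert_of_notMem hxQ] at h1 h2
  omega

end Family

end

/-- The facets of `Δ_t` are exactly the families of pairwise disjoint paths
`P_1, …, P_{t-1}` where `P_i` goes from `(i, n)` to `(m, i)` (here written `0`-indexed:
from `(i, n-1)` to `(m-1, i)` for `i = 0, …, t-2`). -/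
theorem facets_delta_iff (m n t : ℕ) (ht : 1 ≤ t) (htm : t ≤ m) (htn : t ≤ n)
    (F : Finset (Fin m × Fin n)) :
    IsFacetDelta t F ↔
      ∃ P : Fin (t - 1) → Finset (Fin m × Fin n),
        (∀ i : Fin (t - 1),
          IsPath (P i)
            (⟨(i : ℕ), by have := i.isLt; omega⟩, ⟨n - 1, by omega⟩)
            (⟨m - 1, by omega⟩, ⟨(i : ℕ), by have := i.isLt; omega⟩)) ∧
        (∀ i j : Fin (t - 1), i ≠ j → Disjoint (P i) (P j)) ∧
        F = Finset.univ.biUnion P := by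
  constructor
  · intro hF
    have hfacet := hF.isFacetIn_peel
    refine ⟨fun i => minLayer (peel F i),
      fun i => (hfacet i (by omega)).isPath_minLayer (by omega) _ _, fun i j hij => ?_, ?_⟩
    · rcases lt_or_gt_of_ne (Fin.val_ne_of_ne hij) with h | h
      exacts [disjoint_minLayer_peel h, (disjoint_minLayer_peel h).symm]
    · have hpeel := (hfacet (t - 1) (by omega)).isFace
      rw [show t - (t - 1) = 1 by omega] at hpeel
      conv_lhs => rw [← biUnion_range_minLayer_peel_union F (t - 1),
        eq_empty_of_isFaceDelta_one hpeel, Finset.union_empty]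
      ext x
      simp [Fin.exists_iff]
  · rintro ⟨P, hP, hdisj, rfl⟩
    exact isFacetDelta_biUnion_of_isPath ht hP (fun i => by simp [diagIndex])
      (fun i => by simp [diagIndex]; omega) hdisj
end
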